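/- arXiv:math/0510529 — 3 statements merged into one kernel-verified Lean document; each statement's English description precedes it below -/
import Mathlib

section
/- Let I ⊂ K[X] be an ideal with Gröbner basis G with respect to a fixed monomial order on the polynomial ring K[X] in a finite set of indeterminates X. Let L ⊆ X be a subset of the indeterminates with the property that whenever f ∈ G and the leading term LT(f) lies in K[L], then f ∈ K[L]. Then G ∩ K[L] is a Gröbner basis of the ideal I ∩ K[L] of K[L] with respect to the restricted monomial order. -/
open MvPolynomial

/-- The leading monomial (exponent vector) of a multivariate polynomial with respect to a
monomial order: the maximum of its support. -/
noncomputable def leadingMonomial {σ : Type*} (mo : MonomialOrder σ) {K : Type*} [Field K]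
    (f : MvPolynomial σ K) : σ →₀ ℕ :=
  mo.toSyn.symm (f.support.sup fun μ => mo.toSyn μ)

/-- The leading term of a multivariate polynomial with respect to a monomial order. -/
noncomputable def leadingTerm {σ : Type*} (mo : MonomialOrder σ) {K : Type*} [Field K]
    (f : MvPolynomial σ K) : MvPolynomial σ K :=
  MvPolynomial.monomial (leadingMonomial mo f) (MvPolynomial.coeff (leadingMonomial mo f) f)

/-- `G` is a Gröbner basis of the ideal `I` with respect to the monomial order `mo` if
`G ⊆ I` and the leading terms of the elements of `G` generate the ideal generated by the
leading terms of all elements of `I`. -/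
def IsGroebnerBasis {σ : Type*} (mo : MonomialOrder σ) {K : Type*} [Field K]
    (I : Ideal (MvPolynomial σ K)) (G : Set (MvPolynomial σ K)) : Prop :=
  G ⊆ (I : Set (MvPolynomial σ K)) ∧
    Ideal.span (leadingTerm mo '' G) = Ideal.span (leadingTerm mo '' (I : Set (MvPolynomial σ K)))

-- aux lemmas
lemma lm_mem_support {σ : Type*} (mo : MonomialOrder σ) {K : Type*} [Field K]
    {f : MvPolynomial σ K} (hf : f ≠ 0) : leadingMonomial mo f ∈ f.support := by
  obtain ⟨b, hb, he⟩ := Finset.exists_mem_eq_sup f.support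
    (Finset.nonempty_iff_ne_empty.mpr (mt MvPolynomial.support_eq_empty.mp hf)) (fun μ => mo.toSyn μ)
  have : leadingMonomial mo f = b := by
    rw [leadingMonomial, he]; exact mo.toSyn.symm_apply_apply b
  rwa [this]

lemma lm_coeff_ne_zero {σ : Type*} (mo : MonomialOrder σ) {K : Type*} [Field K]
    {f : MvPolynomial σ K} (hf : f ≠ 0) :
    MvPolynomial.coeff (leadingMonomial mo f) f ≠ 0 :=
  MvPolynomial.mem_support_iff.mp (lm_mem_support mo hf)

lemma lm_support_subset {σ : Type*} (mo : MonomialOrder σ) {K : Type*} [Field K]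
    {f : MvPolynomial σ K} (hf : f ≠ 0) {L : Set σ}
    (hfL : f ∈ MvPolynomial.supported K L) :
    ↑(leadingMonomial mo f).support ⊆ L := by
  intro x hx
  exact (MvPolynomial.mem_supported.mp hfL)
    (MvPolynomial.mem_vars x |>.mpr ⟨_, lm_mem_support mo hf, hx⟩)

/-- **Lemma (restriction of a Gröbner basis to a subset of the variables).**
Let `I ⊆ K[X]` be an ideal with Gröbner basis `G` with respect to a fixed monomial order,
where `X` is a finite set of indeterminates.  Let `L ⊆ X` be such that every `f ∈ G` whose
leading term lies in `K[L]` itself lies in `K[L]`.  Then `G ∩ K[L]` is a Gröbner basis of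
the ideal `I ∩ K[L]` of `K[L]` (with respect to the restricted monomial order): the leading
terms of elements of `G ∩ K[L]` generate, as an ideal of the subalgebra `K[L]`, the same
ideal as the leading terms of all elements of `I ∩ K[L]`. -/
theorem groebner_inter_supported {σ : Type*} [Finite σ] {K : Type*} [Field K]
    (mo : MonomialOrder σ) (I : Ideal (MvPolynomial σ K)) (G : Set (MvPolynomial σ K))
    (hG : IsGroebnerBasis mo I G) (L : Set σ)
    (hL : ∀ f ∈ G, leadingTerm mo f ∈ MvPolynomial.supported K L →
      f ∈ MvPolynomial.supported K L) :
    (∀ f ∈ G, f ∈ MvPolynomial.supported K L → f ∈ I) ∧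
    Ideal.span {g : ↥(MvPolynomial.supported K L) |
        ∃ f ∈ G, f ∈ MvPolynomial.supported K L ∧ (g : MvPolynomial σ K) = leadingTerm mo f}
      = Ideal.span {g : ↥(MvPolynomial.supported K L) |
        ∃ f ∈ I, f ∈ MvPolynomial.supported K L ∧ (g : MvPolynomial σ K) = leadingTerm mo f} := by
  refine ⟨fun f hf _ => hG.1 hf, le_antisymm ?_ ?_⟩
  · apply Ideal.span_mono
    rintro g ⟨f, hfG, hfL, hg⟩
    exact ⟨f, hG.1 hfG, hfL, hg⟩
  · rw [Ideal.span_le]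
    rintro g ⟨f, hfI, hfL, hg⟩
    classical
    by_cases hf0 : f = 0
    · have : g = 0 := by
        apply Subtype.ext
        simp [hg, hf0, leadingTerm]
      rw [this]; exact Ideal.zero_mem _
    -- f ≠ 0 : LT f ∈ span (LT '' G)
    have h1 : leadingTerm mo f ∈ Ideal.span (leadingTerm mo '' G) := by
      rw [hG.2]
      exact Ideal.subset_span ⟨f, hfI, rfl⟩
    -- pass to monomial ideal with set of leading monomials of nonzero elements of G
    set S : Set (σ →₀ ℕ) := leadingMonomial mo '' {p | p ∈ G ∧ p ≠ 0} with hS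
    have h2 : Ideal.span (leadingTerm mo '' G) ≤
        Ideal.span ((fun s => MvPolynomial.monomial s (1 : K)) '' S) := by
      rw [Ideal.span_le]
      rintro _ ⟨p, hpG, rfl⟩
      by_cases hp0 : p = 0
      · simp [hp0, leadingTerm]
      · have : leadingTerm mo p = MvPolynomial.C (MvPolynomial.coeff (leadingMonomial mo p) p)
            * MvPolynomial.monomial (leadingMonomial mo p) (1 : K) := by
          rw [leadingTerm, MvPolynomial.C_mul_monomial, mul_one]
        rw [this]
        exact Ideal.mul_mem_left _ _ (Ideal.subset_span ⟨_, ⟨p, ⟨hpG, hp0⟩, rfl⟩, rfl⟩)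
    have h3 := MvPolynomial.mem_ideal_span_monomial_image.mp (h2 h1)
    have hlmf : leadingMonomial mo f ∈ (leadingTerm mo f).support := by
      rw [leadingTerm, MvPolynomial.support_monomial]
      simp [lm_coeff_ne_zero mo hf0]
    obtain ⟨si, hsiS, hsile⟩ := h3 _ hlmf
    obtain ⟨p, ⟨hpG, hp0⟩, rfl⟩ := hsiS
    -- p's leading monomial support ⊆ support of lm f ⊆ L
    have hsupp_f : ↑(leadingMonomial mo f).support ⊆ L := lm_support_subset mo hf0 hfL
    have hsupp_p : ↑(leadingMonomial mo p).support ⊆ L := by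
      refine subset_trans ?_ hsupp_f
      intro x hx
      simp only [Finset.mem_coe, Finsupp.mem_support_iff] at hx ⊢
      have := Finsupp.le_def.mp hsile x
      omega
    have hLTp : leadingTerm mo p ∈ MvPolynomial.supported K L := by
      rw [MvPolynomial.mem_supported, leadingTerm, MvPolynomial.vars_monomial
        (lm_coeff_ne_zero mo hp0)]
      exact hsupp_p
    have hpL : p ∈ MvPolynomial.supported K L := hL p hpG hLTp
    -- the quotient monomial
    set μ := leadingMonomial mo f
    set ν := leadingMonomial mo p
    set c := MvPolynomial.coeff μ f
    set d := MvPolynomial.coeff ν p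
    have hq : (MvPolynomial.monomial (μ - ν) (c * d⁻¹) : MvPolynomial σ K)
        ∈ MvPolynomial.supported K L := by
      rw [MvPolynomial.mem_supported, MvPolynomial.vars_monomial
        (mul_ne_zero (lm_coeff_ne_zero mo hf0) (inv_ne_zero (lm_coeff_ne_zero mo hp0)))]
      exact subset_trans (Finset.coe_subset.mpr Finsupp.support_tsub) hsupp_f
    have hmul : (g : MvPolynomial σ K) =
        (MvPolynomial.monomial (μ - ν) (c * d⁻¹) : MvPolynomial σ K) * leadingTerm mo p := by
      rw [hg, leadingTerm, leadingTerm, MvPolynomial.monomial_mul]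
      congr 1
      · rw [tsub_add_cancel_of_le hsile]
      · rw [mul_assoc, inv_mul_cancel₀ (lm_coeff_ne_zero mo hp0), mul_one]
    have : g = (⟨_, hq⟩ : ↥(MvPolynomial.supported K L)) * ⟨leadingTerm mo p, hLTp⟩ := by
      apply Subtype.ext
      push_cast
      exact hmul
    rw [this]
    exact Ideal.mul_mem_left _ _ (Ideal.subset_span ⟨p, hpG, hpL, rfl⟩)
end

section
/- Fix i ∈ {1,…,k} with t_i ≥ 2, d_{i−1} < d_i and c_i < c_{i+1} (with d_0 = 0, c_{k+1} = n+1), and write t = t_i, d = d_i, c = c_i. Let N = L ∖ {x_{d,c}}, which is a ladder with the same upper outside corners as L and lower outside corners (d_1,c_1),…,(d_{i−1},c_{i−1}),(d−1,c),(d,c+1),(d_{i+1},c_{i+1}),…,(d_k,c_k), and let τ = (t_1,…,t_{i−1},t_i,t_i,t_{i+1},…,t_k). For row indices 1 ≤ i_1 < … < i_{t−1} < d and column indices c < j_1 < … < j_{t−1} ≤ n, write L_{i_1,…,i_{t−1},d;c,j_1,…,j_{t−1}} for the t×t minor of X with rows i_1,…,i_{t−1},d and columns c,j_1,…,j_{t−1},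 and L_{i_1,…,i_{t−1};j_1,…,j_{t−1}} for the (t−1)×(t−1) minor with rows i_1,…,i_{t−1} and columns j_1,…,j_{t−1}, with the convention that a minor equals 0 if it involves an entry not in L. Then for any two such choices of indices (i_1,…,i_{t−1}; j_1,…,j_{t−1}) and (k_1,…,k_{t−1}; l_1,…,l_{t−1}), the polynomial L_{i_1,…,i_{t−1},d;c,j_1,…,j_{t−1}}·L_{k_1,…,k_{t−1};l_1,…,l_{t−1}} − L_{k_1,…,k_{t−1},d;c,l_1,…,l_{t−1}}·L_{i_1,…,i_{t−1};j_1,…,j_{t−1}} belongs to the mixed ladder determinantal ideal I_τ(N) ⊆ K[L]. -/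
open MvPolynomial

/-- The data of a two-sided ladder inside an `m × n` matrix of indeterminates,
with upper outside corners `(b i, a i)` and lower outside corners `(d j, c j)`,
together with a vector `t` of minor sizes, subject to the standing assumptions. -/
structure LadderData where
  m : ℕ
  n : ℕ
  h : ℕ
  k : ℕ
  hpos : 0 < h
  kpos : 0 < k
  hmn : m ≤ n
  b : Fin h → ℕ
  a : Fin h → ℕ
  d : Fin k → ℕ
  c : Fin k → ℕ
  t : Fin k → ℕ
  b_mono : StrictMono b
  a_mono : StrictMono a
  b_first : b ⟨0, hpos⟩ = 1
  b_le : ∀ i, b i ≤ m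
  a_pos : ∀ i, 1 ≤ a i
  a_last : a ⟨h - 1, Nat.sub_lt hpos Nat.one_pos⟩ = n
  d_mono : Monotone d
  c_mono : Monotone c
  d_pos : ∀ j, 1 ≤ d j
  d_last : d ⟨k - 1, Nat.sub_lt kpos Nat.one_pos⟩ = m
  c_first : c ⟨0, kpos⟩ = 1
  c_le : ∀ j, c j ≤ n
  corners_distinct : ∀ j j' : Fin k, d j = d j' → c j = c j' → j = j'
  t_pos : ∀ j, 1 ≤ t j
  step_d : ∀ (j : ℕ) (hj : j + 1 < k),
    d ⟨j, Nat.lt_of_succ_lt hj⟩ + t ⟨j + 1, hj⟩ < d ⟨j + 1, hj⟩ + t ⟨j, Nat.lt_of_succ_lt hj⟩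
  step_c : ∀ (j : ℕ) (hj : j + 1 < k),
    c ⟨j, Nat.lt_of_succ_lt hj⟩ + t ⟨j, Nat.lt_of_succ_lt hj⟩ < c ⟨j + 1, hj⟩ + t ⟨j + 1, hj⟩

namespace LadderData

/-- The set of positions (row, column) of the indeterminates of the ladder `L`. -/
def L (D : LadderData) : Set (ℕ × ℕ) :=
  {p | ∃ (i : Fin D.h) (j : Fin D.k),
    D.b i ≤ p.1 ∧ p.1 ≤ D.m ∧ 1 ≤ p.2 ∧ p.2 ≤ D.a i ∧
    1 ≤ p.1 ∧ p.1 ≤ D.d j ∧ D.c j ≤ p.2 ∧ p.2 ≤ D.n}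

/-- The one-sided subladder `L_j` with lower outside corner `(d j, c j)`. -/
def Lj (D : LadderData) (j : Fin D.k) : Set (ℕ × ℕ) :=
  {p ∈ D.L | p.1 ≤ D.d j ∧ D.c j ≤ p.2}

end LadderData

/-- The ideal of `K[V]` (`V` a set of positions of indeterminates) generated by the
`s × s` minors of the generic matrix all of whose entries lie in `S`. -/
noncomputable def minorsIdeal (K : Type*) [Field K] (V S : Set (ℕ × ℕ)) (s : ℕ) :
    Ideal (MvPolynomial ↥V K) :=
  Ideal.span {f | ∃ r cc : Fin s → ℕ, StrictMono r ∧ StrictMono cc ∧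
    (∀ p q, (r p, cc q) ∈ S) ∧
    ∃ hmem : ∀ p q, ((r p, cc q) : ℕ × ℕ) ∈ V,
    f = (Matrix.of fun p q =>
      (MvPolynomial.X (⟨(r p, cc q), hmem p q⟩ : V) : MvPolynomial ↥V K)).det}

/-- The mixed ladder determinantal ideal `I_t(L) = I_{t_1}(L_1) + ⋯ + I_{t_k}(L_k) ⊆ K[L]`. -/
noncomputable def LadderData.It (D : LadderData) (K : Type*) [Field K] :
    Ideal (MvPolynomial ↥D.L K) :=
  ⨆ j : Fin D.k, minorsIdeal K D.L (D.Lj j) (D.t j)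

/-- Every entry of the ladder is involved in one of the minors generating `I_t(L)`. -/
def LadderData.Nondeg (D : LadderData) : Prop :=
  ∀ p ∈ D.L, ∃ (j : Fin D.k) (r cc : Fin (D.t j) → ℕ),
    StrictMono r ∧ StrictMono cc ∧ (∀ u v, (r u, cc v) ∈ D.Lj j) ∧ ∃ u v, (r u, cc v) = p

namespace LadderData

/-- `d_{i−1}`, with the convention `d_0 = 0` (the fixed paper index `i` corresponds to the
0-based index `i0`). -/
def dPrev (D : LadderData) (i0 : Fin D.k) : ℕ :=
  if h : 0 < (i0 : ℕ) then D.d ⟨(i0 : ℕ) - 1, by have := i0.isLt; omega⟩ else 0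

/-- `c_{i+1}`, with the convention `c_{k+1} = n + 1`. -/
def cNext (D : LadderData) (i0 : Fin D.k) : ℕ :=
  if h : (i0 : ℕ) + 1 < D.k then D.c ⟨(i0 : ℕ) + 1, h⟩ else D.n + 1

/-- The ladder `N = L ∖ {x_{d,c}}`. -/
def Nset (D : LadderData) (i0 : Fin D.k) : Set (ℕ × ℕ) :=
  D.L \ {(D.d i0, D.c i0)}

/-- The rows of the lower outside corners
`(d_1,c_1),…,(d_{i−1},c_{i−1}),(d−1,c),(d,c+1),(d_{i+1},c_{i+1}),…,(d_k,c_k)` of `N`. -/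
def dN (D : LadderData) (i0 : Fin D.k) (l : Fin (D.k + 1)) : ℕ :=
  if h1 : (l : ℕ) < (i0 : ℕ) then D.d ⟨(l : ℕ), by have := i0.isLt; omega⟩
  else if (l : ℕ) = (i0 : ℕ) then D.d i0 - 1
  else if (l : ℕ) = (i0 : ℕ) + 1 then D.d i0
  else D.d ⟨(l : ℕ) - 1, by have := l.isLt; have := D.kpos; omega⟩

/-- The columns of the lower outside corners of `N`. -/
def cN (D : LadderData) (i0 : Fin D.k) (l : Fin (D.k + 1)) : ℕ :=
  if h1 : (l : ℕ) < (i0 : ℕ) then D.c ⟨(l : ℕ), by have := i0.isLt; omega⟩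
  else if (l : ℕ) = (i0 : ℕ) then D.c i0
  else if (l : ℕ) = (i0 : ℕ) + 1 then D.c i0 + 1
  else D.c ⟨(l : ℕ) - 1, by have := l.isLt; have := D.kpos; omega⟩

/-- `τ = (t_1,…,t_{i−1},t_i,t_i,t_{i+1},…,t_k)`. -/
def tN (D : LadderData) (i0 : Fin D.k) (l : Fin (D.k + 1)) : ℕ :=
  if h1 : (l : ℕ) ≤ (i0 : ℕ) then D.t ⟨(l : ℕ), by have := i0.isLt; omega⟩
  else D.t ⟨(l : ℕ) - 1, by have := l.isLt; have := D.kpos; omega⟩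

/-- The mixed ladder determinantal ideal `I_τ(N)`, regarded as an ideal of `K[L]`. -/
noncomputable def IτN (D : LadderData) (i0 : Fin D.k) (K : Type*) [Field K] :
    Ideal (MvPolynomial ↥D.L K) :=
  ⨆ l : Fin (D.k + 1),
    minorsIdeal K D.L {p ∈ D.Nset i0 | p.1 ≤ D.dN i0 l ∧ D.cN i0 l ≤ p.2} (D.tN i0 l)

end LadderData

open Classical in
/-- The minor of the generic matrix with rows `r` and columns `cc`, with the convention
that it equals `0` whenever it involves an entry outside of `V`. -/
noncomputable def minorOrZero (K : Type*) [Field K] (V : Set (ℕ × ℕ)) {s : ℕ}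
    (r cc : Fin s → ℕ) : MvPolynomial ↥V K :=
  if h : ∀ p q, ((r p, cc q) : ℕ × ℕ) ∈ V then
    (Matrix.of fun p q => (MvPolynomial.X (⟨(r p, cc q), h p q⟩ : V) : MvPolynomial ↥V K)).det
  else 0


open Matrix

section DetHelpers

variable {R : Type*} [CommRing R]

/-- Determinant is linear in one row: expansion over an arbitrary family. -/
lemma det_updateRow_sum_family {n : Type*} [DecidableEq n] [Fintype n]
    {ι' : Type*} (M : Matrix n n R) (j : n) (t : Finset ι') (coeff : ι' → R) (f : ι' → (n → R)) :
    (M.updateRow j (∑ i ∈ t, coeff i • f i)).det = ∑ i ∈ t, coeff i * (M.updateRow j (f i)).det := by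
  classical
  induction t using Finset.induction_on with
  | empty =>
      simp only [Finset.sum_empty]
      exact Matrix.det_eq_zero_of_row_eq_zero j (by simp)
  | @insert a u ha ih =>
      rw [Finset.sum_insert ha, Matrix.det_updateRow_add, Matrix.det_updateRow_smul,
        Finset.sum_insert ha, ih]

/-- Identity I: an alternating-type quadratic identity obtained from a matrix whose
first row is a linear combination of the others. -/
lemma identityI {T : ℕ} (P : Matrix (Fin (T + 1)) (Fin (T + 1)) R)
    (cst : Fin T → R) (hP : ∀ b, P 0 b = ∑ r : Fin T, cst r * P r.succ b) :
    ∑ y : Fin (T + 1), (-1) ^ (y : ℕ) * P 0 y * (P.submatrix Fin.succ y.succAbove).det = 0 := by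
  have hdet : P.det = 0 := by
    have h0 : P 0 = ∑ k : Fin (T + 1), (Fin.cases 0 cst k : R) • P k := by
      funext b
      rw [Fin.sum_univ_succ]
      simp only [Fin.cases_zero, Fin.cases_succ, zero_smul, Pi.zero_apply, Finset.sum_apply,
        Pi.smul_apply, smul_eq_mul, zero_add]
      · exact hP b
    calc P.det = (P.updateRow 0 (P 0)).det := by rw [Matrix.updateRow_eq_self]
    _ = (P.updateRow 0 (∑ k : Fin (T + 1), (Fin.cases 0 cst k : R) • P k)).det := by rw [← h0]
    _ = (Fin.cases 0 cst (0 : Fin (T + 1)) : R) • P.det := Matrix.det_updateRow_sum P 0 _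
    _ = 0 := by simp
  rw [← Matrix.det_succ_row_zero, hdet]

/-- Eliminating unit rows from a determinant, membership version: if some rows of `M`
are coordinate-unit vectors supported off the "surviving" columns `cs`, then `det M`
belongs to any ideal containing the determinant of the surviving block. -/
lemma det_mem_of_unit_rows {ι β γ : Type*} [Fintype ι] [DecidableEq ι]
    [Fintype β] [DecidableEq β] [Fintype γ] [DecidableEq γ]
    (M : Matrix ι ι R) (p : (β ⊕ γ) ≃ ι) (cs : γ → ι) (hcs : Function.Injective cs)
    (hrows : ∀ b : β, ∃ i : ι, (∀ g : γ, i ≠ cs g) ∧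
      (M (p (Sum.inl b)) = fun j => if i = j then (1 : R) else 0))
    (I : Ideal R)
    (hD : (Matrix.of fun (a b : γ) => M (p (Sum.inr a)) (cs b)).det ∈ I) :
    M.det ∈ I := by
  classical
  choose cu hcu hval using hrows
  by_cases hinj : Function.Injective cu
  · -- build equiv
    have hfinj : Function.Injective (Sum.elim cu cs) := by
      rintro (b1 | g1) (b2 | g2) h
      · simp only [Sum.elim_inl] at h; exact congrArg Sum.inl (hinj h)
      · exact absurd h (hcu b1 g2)
      · exact absurd h.symm (hcu b2 g1)
      · simp only [Sum.elim_inr] at h; exact congrArg Sum.inr (hcs h)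
    have hcard : Fintype.card (β ⊕ γ) = Fintype.card ι := Fintype.card_congr p
    have hbij : Function.Bijective (Sum.elim cu cs) :=
      (Fintype.bijective_iff_injective_and_card _).2 ⟨hfinj, hcard⟩
    set q : (β ⊕ γ) ≃ ι := Equiv.ofBijective _ hbij with hq
    have hqinl : ∀ b, q (Sum.inl b) = cu b := fun b => rfl
    have hqinr : ∀ g, q (Sum.inr g) = cs g := fun g => rfl
    have hblocks : M.submatrix p q =
        Matrix.fromBlocks 1 0
          (Matrix.of fun (a : γ) (b : β) => M (p (Sum.inr a)) (cu b))
          (Matrix.of fun (a b : γ) => M (p (Sum.inr a)) (cs b)) := by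
      ext (b1 | g1) (b2 | g2)
      · simp only [submatrix_apply, fromBlocks_apply₁₁, hqinl]
        rw [hval b1]
        simp only [Matrix.one_apply]
        by_cases h : b1 = b2
        · subst h; simp
        · rw [if_neg (fun hc => h (hinj hc)), if_neg h]
      · simp only [submatrix_apply, fromBlocks_apply₁₂, hqinr]
        rw [hval b1]
        simp only [Matrix.zero_apply]
        rw [if_neg (hcu b1 g2)]
      · simp [hqinl]
      · simp [hqinr]
    have hdetblock : (M.submatrix p q).det =
        (Matrix.of fun (a b : γ) => M (p (Sum.inr a)) (cs b)).det := by
      rw [hblocks, Matrix.det_fromBlocks_zero₁₂, Matrix.det_one, one_mul]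
    -- relate det (M.submatrix p q) to det M
    have hsub : M.submatrix p q = (M.submatrix q q).submatrix (p.trans q.symm) id := by
      ext i j
      simp [Matrix.submatrix_apply]
    have hperm : (M.submatrix p q).det
        = (Equiv.Perm.sign ((p.trans q.symm) : Equiv.Perm (β ⊕ γ)) : ℤ) * M.det := by
      rw [hsub, Matrix.det_permute, Matrix.det_submatrix_equiv_self]
    rcases Int.units_eq_one_or (Equiv.Perm.sign ((p.trans q.symm) : Equiv.Perm (β ⊕ γ))) with hsgn | hsgn <;>
      rw [hsgn] at hperm <;> simp only [Units.val_one, Units.val_neg, Int.cast_one, Int.cast_neg,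
        one_mul, neg_mul, neg_one_mul] at hperm
    · rw [← hperm, hdetblock]; exact hD
    · have : M.det = -(M.submatrix p q).det := by rw [hperm, neg_neg]
      rw [this, hdetblock]
      exact I.neg_mem hD
  · -- two unit rows coincide: det M = 0
    rw [Function.not_injective_iff] at hinj
    obtain ⟨b1, b2, heq, hne⟩ := hinj
    have : M.det = 0 := by
      refine Matrix.det_zero_of_row_eq (i := p (Sum.inl b1)) (j := p (Sum.inl b2)) ?_ ?_
      · intro h
        exact hne (Sum.inl_injective (p.injective h))
      · rw [hval b1, hval b2, heq]
    rw [this]; exact I.zero_mem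

end DetHelpers
open Matrix MvPolynomial

/-- Determinant of a generic-matrix block with arbitrary (not necessarily sorted) row and
column index tuples belongs to the minors ideal, provided all entries lie in `S`. -/
lemma det_X_mem_minorsIdeal {K : Type*} [Field K] {V S : Set (ℕ × ℕ)} {u : ℕ}
    (r cc : Fin u → ℕ) (hS : ∀ a b, (r a, cc b) ∈ S)
    (hV : ∀ a b, ((r a, cc b) : ℕ × ℕ) ∈ V) :
    (Matrix.of fun a b => (X (⟨(r a, cc b), hV a b⟩ : V) : MvPolynomial V K)).det
      ∈ minorsIdeal K V S u := by
  classical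
  set M : Matrix (Fin u) (Fin u) (MvPolynomial V K) :=
    Matrix.of fun a b => (X (⟨(r a, cc b), hV a b⟩ : V) : MvPolynomial V K) with hM
  by_cases hr : Function.Injective r
  · by_cases hc : Function.Injective cc
    · -- sort both tuples
      set σ := Tuple.sort r with hσ
      set τ := Tuple.sort cc with hτ
      have hrm : StrictMono (r ∘ σ) :=
        (Tuple.monotone_sort r).strictMono_of_injective (hr.comp σ.injective)
      have hcm : StrictMono (cc ∘ τ) :=
        (Tuple.monotone_sort cc).strictMono_of_injective (hc.comp τ.injective)
      have hgen : (Matrix.of fun a b =>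
          (X (⟨(r (σ a), cc (τ b)), hV (σ a) (τ b)⟩ : V) : MvPolynomial V K)).det
          ∈ minorsIdeal K V S u := by
        apply Ideal.subset_span
        exact ⟨r ∘ σ, cc ∘ τ, hrm, hcm, fun a b => hS (σ a) (τ b),
          fun a b => hV (σ a) (τ b), rfl⟩
      have hsub : (Matrix.of fun a b =>
          (X (⟨(r (σ a), cc (τ b)), hV (σ a) (τ b)⟩ : V) : MvPolynomial V K)) =
          (M.submatrix σ id).submatrix id τ := by
        ext a b; rfl
      have h1 : ((M.submatrix σ id).submatrix id τ).det
          = (Equiv.Perm.sign τ : ℤ) * ((Equiv.Perm.sign σ : ℤ) * M.det) := by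
        rw [Matrix.det_permute', Matrix.det_permute]
      rw [hsub, h1] at hgen
      rcases Int.units_eq_one_or (Equiv.Perm.sign σ) with h2 | h2 <;>
        rcases Int.units_eq_one_or (Equiv.Perm.sign τ) with h3 | h3 <;>
          rw [h2, h3] at hgen <;>
          simp only [Units.val_one, Units.val_neg, Int.cast_one, Int.cast_neg, one_mul,
            neg_mul, neg_neg, mul_neg, neg_one_mul] at hgen
      · exact hgen
      · exact neg_mem_iff.1 hgen
      · exact neg_mem_iff.1 hgen
      · exact hgen
    · -- repeated column
      rw [Function.not_injective_iff] at hc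
      obtain ⟨b1, b2, heq, hne⟩ := hc
      have : M.det = 0 := by
        apply Matrix.det_zero_of_column_eq hne
        intro a
        simp only [hM, Matrix.of_apply]
        congr 1
        exact Subtype.ext (by simp [heq])
      rw [this]; exact Ideal.zero_mem _
  · -- repeated row
    rw [Function.not_injective_iff] at hr
    obtain ⟨a1, a2, heq, hne⟩ := hr
    have : M.det = 0 := by
      refine Matrix.det_zero_of_row_eq hne (funext fun b => ?_)
      simp only [hM, Matrix.of_apply]
      congr 1
      exact Subtype.ext (by simp [heq])
    rw [this]; exact Ideal.zero_mem _

section ExpSum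

def expSumFun (s : ℕ) (z : Fin (s + 1 + s)) : Fin (s + 1) ⊕ Fin s :=
  if _ : (z : ℕ) = 0 then Sum.inl (Fin.last s)
  else if _ : (z : ℕ) ≤ s then Sum.inl ⟨(z : ℕ) - 1, by omega⟩
  else Sum.inr ⟨(z : ℕ) - (s + 1), by have := z.isLt; omega⟩

def expSumInv (s : ℕ) (a : Fin (s + 1) ⊕ Fin s) : Fin (s + 1 + s) :=
  Sum.elim
    (fun r : Fin (s + 1) =>
      if _ : (r : ℕ) = s then ⟨0, by omega⟩ else ⟨(r : ℕ) + 1, by have := r.isLt; omega⟩)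
    (fun p : Fin s => ⟨s + 1 + (p : ℕ), by have := p.isLt; omega⟩) a

lemma expSumFun_zero (s : ℕ) (z : Fin (s + 1 + s)) (h : (z : ℕ) = 0) :
    expSumFun s z = Sum.inl (Fin.last s) := dif_pos h

lemma expSumFun_low (s : ℕ) (z : Fin (s + 1 + s)) (h0 : (z : ℕ) ≠ 0) (h1 : (z : ℕ) ≤ s) :
    expSumFun s z = Sum.inl ⟨(z : ℕ) - 1, by omega⟩ := by
  unfold expSumFun; rw [dif_neg h0, dif_pos h1]

lemma expSumFun_high (s : ℕ) (z : Fin (s + 1 + s)) (h1 : s < (z : ℕ)) :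
    expSumFun s z = Sum.inr ⟨(z : ℕ) - (s + 1), by have := z.isLt; omega⟩ := by
  unfold expSumFun; rw [dif_neg (by omega), dif_neg (by omega)]

lemma expSumInv_inl_last (s : ℕ) :
    expSumInv s (Sum.inl (Fin.last s)) = ⟨0, by omega⟩ := by
  unfold expSumInv; rw [Sum.elim_inl, dif_pos (by simp)]

lemma expSumInv_inl (s : ℕ) {r : Fin (s + 1)} (h : r ≠ Fin.last s) :
    expSumInv s (Sum.inl r) = ⟨(r : ℕ) + 1, by have := r.isLt; omega⟩ := by
  unfold expSumInv
  rw [Sum.elim_inl, dif_neg (by simpa [Fin.ext_iff] using h)]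

lemma expSumInv_inr (s : ℕ) (p : Fin s) :
    expSumInv s (Sum.inr p) = ⟨s + 1 + (p : ℕ), by have := p.isLt; omega⟩ := rfl

/-- The explicit equivalence `Fin (s+1+s) ≃ Fin (s+1) ⊕ Fin s` sending `0` to `inl (last s)`,
`z ∈ [1, s]` to `inl ⟨z-1⟩` and `z ∈ [s+1, 2s]` to `inr ⟨z-s-1⟩`. -/
def expSum (s : ℕ) : Fin (s + 1 + s) ≃ (Fin (s + 1) ⊕ Fin s) where
  toFun := expSumFun s
  invFun := expSumInv s
  left_inv z := by
    by_cases h0 : (z : ℕ) = 0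
    · rw [expSumFun_zero s z h0, expSumInv_inl_last]
      exact Fin.ext (by simp [h0.symm])
    · by_cases h1 : (z : ℕ) ≤ s
      · rw [expSumFun_low s z h0 h1, expSumInv_inl s (by simp [Fin.ext_iff]; omega)]
        exact Fin.ext (by simp; omega)
      · rw [expSumFun_high s z (by omega), expSumInv_inr]
        exact Fin.ext (by simp; omega)
  right_inv a := by
    match a with
    | Sum.inl r =>
      by_cases h0 : (r : ℕ) = s
      · have hr : r = Fin.last s := Fin.ext (by simpa using h0)
        subst hr
        rw [expSumInv_inl_last, expSumFun_zero s _ (by simp)]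
      · rw [expSumInv_inl s (by simpa [Fin.ext_iff] using h0),
          expSumFun_low s _ (by simp) (by simp; omega)]
        exact congrArg Sum.inl (Fin.ext (by simp))
    | Sum.inr p =>
      rw [expSumInv_inr, expSumFun_high s _ (by simp; omega)]
      exact congrArg Sum.inr (Fin.ext (by simp))

lemma expSum_symm_inl_last (s : ℕ) :
    (expSum s).symm (Sum.inl (Fin.last s)) = ⟨0, by omega⟩ := expSumInv_inl_last s

lemma expSum_symm_inl (s : ℕ) {r : Fin (s + 1)} (h : r ≠ Fin.last s) :
    (expSum s).symm (Sum.inl r) = ⟨(r : ℕ) + 1, by have := r.isLt; omega⟩ := expSumInv_inl s h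

lemma expSum_symm_inr (s : ℕ) (p : Fin s) :
    (expSum s).symm (Sum.inr p) = ⟨s + 1 + (p : ℕ), by have := p.isLt; omega⟩ := rfl

lemma expSum_apply_zero (s : ℕ) (z : Fin (s + 1 + s)) (h : (z : ℕ) = 0) :
    expSum s z = Sum.inl (Fin.last s) := expSumFun_zero s z h

lemma expSum_apply_low (s : ℕ) (z : Fin (s + 1 + s)) (h0 : (z : ℕ) ≠ 0) (h1 : (z : ℕ) ≤ s) :
    expSum s z = Sum.inl ⟨(z : ℕ) - 1, by omega⟩ := expSumFun_low s z h0 h1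

lemma expSum_apply_high (s : ℕ) (z : Fin (s + 1 + s)) (h1 : s < (z : ℕ)) :
    expSum s z = Sum.inr ⟨(z : ℕ) - (s + 1), by have := z.isLt; omega⟩ := expSumFun_high s z h1

end ExpSum

section ExchangeAlgebra

variable {R : Type*} [CommRing R]

/-- Merged row coordinates: `inl`-block is `(ri, d)`, `inr`-block is `kr`. -/
def EAnu (s d : ℕ) (ri kr : Fin s → ℕ) : (Fin (s + 1) ⊕ Fin s) → ℕ :=
  Sum.elim (Fin.snoc ri d) kr

/-- The column vector of the generic matrix at column `γ`, over the merged rows. -/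
def EAw (x : ℕ × ℕ → R) (s d : ℕ) (ri kr : Fin s → ℕ) (γ : ℕ) :
    (Fin (s + 1) ⊕ Fin s) → R := fun i => x (EAnu s d ri kr i, γ)

/-- Unit coordinate vector. -/
def EAunit (s : ℕ) (i : Fin (s + 1) ⊕ Fin s) : (Fin (s + 1) ⊕ Fin s) → R :=
  fun j => if i = j then 1 else 0

/-- Base bracket rows: real columns `(c, js)` in the `inl` block, units in the `inr` block. -/
def EAM0 (x : ℕ × ℕ → R) (s d c : ℕ) (ri kr js : Fin s → ℕ) :
    Matrix (Fin (s + 1) ⊕ Fin s) (Fin (s + 1) ⊕ Fin s) R :=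
  Matrix.of (Sum.elim (fun q : Fin (s + 1) => EAw x s d ri kr (Fin.cons (α := fun _ => ℕ) c js q))
    (fun p : Fin s => EAunit (R := R) s (Sum.inr p)))

/-- The pivot-replacement linear functional. -/
def EALL (x : ℕ × ℕ → R) (s d c : ℕ) (ri kr js : Fin s → ℕ)
    (v : (Fin (s + 1) ⊕ Fin s) → R) : R :=
  ((EAM0 x s d c ri kr js).updateRow (Sum.inl 0) v).det

/-- Secondary bracket rows: units in the `inl` block, real columns `ls` in the `inr` block. -/
def EAgg (x : ℕ × ℕ → R) (s d : ℕ) (ri kr ls : Fin s → ℕ) :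
    (Fin (s + 1) ⊕ Fin s) → (Fin (s + 1) ⊕ Fin s) → R :=
  Sum.elim (fun q : Fin (s + 1) => EAunit (R := R) s (Sum.inl q))
    (fun p : Fin s => EAw x s d ri kr (ls p))

/-- The list of `2s+2` vectors entering the exchange identity. -/
def EAu (x : ℕ × ℕ → R) (s d c : ℕ) (ri kr ls : Fin s → ℕ) :
    Fin (s + 1 + s + 1) → (Fin (s + 1) ⊕ Fin s) → R :=
  Fin.cons (EAw x s d ri kr c) (fun z => EAgg x s d ri kr ls (expSum s z))

/-- The complementary bracket for the `y`-th term of the exchange identity. -/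
def EABK (x : ℕ × ℕ → R) (s d c : ℕ) (ri kr ls : Fin s → ℕ) (y : Fin (s + 1 + s + 1)) : R :=
  (Matrix.of fun a i : Fin (s + 1) ⊕ Fin s =>
    EAu x s d c ri kr ls (y.succAbove ((expSum s).symm a)) i).det

/-- The master exchange identity. -/
lemma EA_key (x : ℕ × ℕ → R) (s d c : ℕ) (ri kr js ls : Fin s → ℕ) :
    ∑ y : Fin (s + 1 + s + 1),
      (-1) ^ (y : ℕ) * EALL x s d c ri kr js (EAu x s d c ri kr ls y)
        * EABK x s d c ri kr ls y = 0 := by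
  classical
  set κ := expSum s with hκ
  set P : Matrix (Fin (s + 1 + s + 1)) (Fin (s + 1 + s + 1)) R :=
    Matrix.of (Fin.cons (fun b => EALL x s d c ri kr js (EAu x s d c ri kr ls b))
      (fun r b => EAu x s d c ri kr ls b (κ r))) with hPdef
  have hP0 : ∀ b, P 0 b = EALL x s d c ri kr js (EAu x s d c ri kr ls b) := by
    intro b
    simp only [hPdef, Matrix.of_apply, Fin.cons_zero]
  have hPsucc : ∀ (r : Fin (s + 1 + s)) b, P r.succ b = EAu x s d c ri kr ls b (κ r) := by
    intro r b
    simp only [hPdef, Matrix.of_apply, Fin.cons_succ]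
  have hlin : ∀ b, P 0 b = ∑ r : Fin (s + 1 + s),
      (EALL x s d c ri kr js (EAunit s (κ r))) * P r.succ b := by
    intro b
    rw [hP0]
    have hexp : EAu x s d c ri kr ls b
        = ∑ i : Fin (s + 1) ⊕ Fin s,
            EAu x s d c ri kr ls b i • fun j => if i = j then (1 : R) else 0 :=
      pi_eq_sum_univ _
    unfold EALL
    conv_lhs => rw [hexp]
    rw [det_updateRow_sum_family]
    rw [← Equiv.sum_comp κ (fun i => EAu x s d c ri kr ls b i *
      ((EAM0 x s d c ri kr js).updateRow (Sum.inl 0) fun j => if i = j then (1:R) else 0).det)]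
    refine Finset.sum_congr rfl fun r _ => ?_
    rw [hPsucc, mul_comm]
    rfl
  have hid := identityI P (fun r => EALL x s d c ri kr js (EAunit s (κ r))) hlin
  rw [← hid]
  refine Finset.sum_congr rfl fun y _ => ?_
  rw [hP0]
  congr 1
  have hsub : P.submatrix Fin.succ y.succAbove =
      ((Matrix.of fun a i : Fin (s + 1) ⊕ Fin s =>
        EAu x s d c ri kr ls (y.succAbove (κ.symm a)) i).submatrix κ κ)ᵀ := by
    ext r b
    simp only [Matrix.submatrix_apply, Matrix.transpose_apply, Matrix.of_apply,
      Equiv.symm_apply_apply]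
    rw [hPsucc]
  rw [hsub, Matrix.det_transpose, Matrix.det_submatrix_equiv_self]
  rfl

end ExchangeAlgebra

section ExchangeEval

variable {R : Type*} [CommRing R]

/-- Evaluation of a bracket with real rows in the `inl` block and diagonal units in the
`inr` block. -/
lemma EA_det_block_lower (x : ℕ × ℕ → R) (s d : ℕ) (ri kr : Fin s → ℕ)
    (cols : Fin (s + 1) → ℕ) :
    (Matrix.of (Sum.elim (fun q : Fin (s + 1) => EAw x s d ri kr (cols q))
      (fun p : Fin s => EAunit (R := R) s (Sum.inr p)))).det
    = (Matrix.of fun p q : Fin (s + 1) => x (Fin.snoc (α := fun _ => ℕ) ri d p, cols q)).det := by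
  have hblk : (Matrix.of (Sum.elim (fun q : Fin (s + 1) => EAw x s d ri kr (cols q))
      (fun p : Fin s => EAunit (R := R) s (Sum.inr p)))) =
      Matrix.fromBlocks
        (Matrix.of fun a b : Fin (s + 1) => x (Fin.snoc (α := fun _ => ℕ) ri d b, cols a))
        (Matrix.of fun (a : Fin (s + 1)) (b : Fin s) => x (kr b, cols a))
        0 1 := by
    ext (a | a) (b | b)
    · rfl
    · rfl
    · simp [EAunit, Matrix.fromBlocks]
    · simp [EAunit, Matrix.fromBlocks, Matrix.one_apply]
  rw [hblk, Matrix.det_fromBlocks_zero₂₁, Matrix.det_one, mul_one, ← Matrix.det_transpose]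
  rfl

/-- Evaluation of a bracket with diagonal units in the `inl` block and real rows in the
`inr` block. -/
lemma EA_det_block_upper (x : ℕ × ℕ → R) (s d : ℕ) (ri kr : Fin s → ℕ)
    (cols : Fin s → ℕ) :
    (Matrix.of (Sum.elim (fun q : Fin (s + 1) => EAunit (R := R) s (Sum.inl q))
      (fun p : Fin s => EAw x s d ri kr (cols p)))).det
    = (Matrix.of fun p q : Fin s => x (kr p, cols q)).det := by
  have hblk : (Matrix.of (Sum.elim (fun q : Fin (s + 1) => EAunit (R := R) s (Sum.inl q))
      (fun p : Fin s => EAw x s d ri kr (cols p)))) =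
      Matrix.fromBlocks 1 0
        (Matrix.of fun (a : Fin s) (b : Fin (s + 1)) => x (Fin.snoc (α := fun _ => ℕ) ri d b, cols a))
        (Matrix.of fun a b : Fin s => x (kr b, cols a)) := by
    ext (a | a) (b | b)
    · simp [EAunit, Matrix.fromBlocks, Matrix.one_apply]
    · simp [EAunit, Matrix.fromBlocks]
    · rfl
    · rfl
  rw [hblk, Matrix.det_fromBlocks_zero₁₂, Matrix.det_one, one_mul, ← Matrix.det_transpose]
  rfl

/-- `EALL` on a real column vector. -/
lemma EA_LL_w (x : ℕ × ℕ → R) (s d c : ℕ) (ri kr js : Fin s → ℕ) (γ : ℕ) :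
    EALL x s d c ri kr js (EAw x s d ri kr γ)
    = (Matrix.of fun p q : Fin (s + 1) =>
        x (Fin.snoc (α := fun _ => ℕ) ri d p, Fin.cons (α := fun _ => ℕ) γ js q)).det := by
  unfold EALL
  have hupd : (EAM0 x s d c ri kr js).updateRow (Sum.inl 0) (EAw x s d ri kr γ)
      = Matrix.of (Sum.elim
          (fun q : Fin (s + 1) => EAw x s d ri kr (Fin.cons (α := fun _ => ℕ) γ js q))
          (fun p : Fin s => EAunit (R := R) s (Sum.inr p))) := by
    ext (a | a) i
    · by_cases h : a = 0
      · subst h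
        rw [Matrix.updateRow_self]
        simp only [Matrix.of_apply, Sum.elim_inl, Fin.cons_zero]
      · rw [Matrix.updateRow_ne (fun hc => h (by injection hc))]
        obtain ⟨a', rfl⟩ := Fin.eq_succ_of_ne_zero h
        simp only [EAM0, Matrix.of_apply, Sum.elim_inl, Fin.cons_succ]
    · rw [Matrix.updateRow_ne (by simp)]
      rfl
  rw [hupd, EA_det_block_lower]

/-- The zeroth term: `EALL (u 0)` is the big `(i,j)`-minor. -/
lemma EA_LL0 (x : ℕ × ℕ → R) (s d c : ℕ) (ri kr js ls : Fin s → ℕ) :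
    EALL x s d c ri kr js (EAu x s d c ri kr ls 0)
    = (Matrix.of fun p q : Fin (s + 1) =>
        x (Fin.snoc (α := fun _ => ℕ) ri d p, Fin.cons (α := fun _ => ℕ) c js q)).det := by
  have h0 : EAu x s d c ri kr ls 0 = EAw x s d ri kr c := Fin.cons_zero _ _
  rw [h0, EA_LL_w]

/-- The zeroth complementary bracket: `BK 0` is the small `(k,l)`-minor. -/
lemma EA_BK0 (x : ℕ × ℕ → R) (s d c : ℕ) (ri kr ls : Fin s → ℕ) :
    EABK x s d c ri kr ls 0
    = (Matrix.of fun p q : Fin s => x (kr p, ls q)).det := by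
  unfold EABK
  have hrows : (Matrix.of fun a i : Fin (s + 1) ⊕ Fin s =>
      EAu x s d c ri kr ls ((0 : Fin (s+1+s+1)).succAbove ((expSum s).symm a)) i)
      = Matrix.of (Sum.elim (fun q : Fin (s + 1) => EAunit (R := R) s (Sum.inl q))
          (fun p : Fin s => EAw x s d ri kr (ls p))) := by
    ext a i
    have h1 : (0 : Fin (s+1+s+1)).succAbove ((expSum s).symm a) = ((expSum s).symm a).succ :=
      Fin.zero_succAbove _
    rw [Matrix.of_apply, h1]
    have h2 : EAu x s d c ri kr ls ((expSum s).symm a).succ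
        = EAgg x s d ri kr ls (expSum s ((expSum s).symm a)) := Fin.cons_succ _ _ _
    rw [h2, Equiv.apply_symm_apply]
    rfl
  rw [hrows, EA_det_block_upper]

end ExchangeEval

section ExchangeEval2

variable {R : Type*} [CommRing R]

/-- The row-grouping equivalence: `inl b ↦ inl (castSucc b)` (unit-row positions),
`inr 0 ↦ inl (last s)`, `inr (p+1) ↦ inr p` (real-row positions). -/
def psiEquiv (s : ℕ) : (Fin s ⊕ Fin (s + 1)) ≃ (Fin (s + 1) ⊕ Fin s) where
  toFun := Sum.elim (fun b : Fin s => Sum.inl b.castSucc)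
    (fun j : Fin (s + 1) =>
      if _ : (j : ℕ) = 0 then Sum.inl (Fin.last s)
      else Sum.inr ⟨(j : ℕ) - 1, by have := j.isLt; omega⟩)
  invFun := Sum.elim
    (fun r : Fin (s + 1) =>
      if _ : (r : ℕ) = s then Sum.inr ⟨0, by omega⟩
      else Sum.inl ⟨(r : ℕ), by have := r.isLt; omega⟩)
    (fun p : Fin s => Sum.inr ⟨(p : ℕ) + 1, by have := p.isLt; omega⟩)
  left_inv a := by
    match a with
    | Sum.inl b =>
      simp only [Sum.elim_inl]
      rw [dif_neg (by have := b.isLt; simp; omega)]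
      exact congrArg Sum.inl (Fin.ext (by simp))
    | Sum.inr j =>
      simp only [Sum.elim_inr]
      by_cases h0 : (j : ℕ) = 0
      · rw [dif_pos h0, Sum.elim_inl, dif_pos (by simp)]
        exact congrArg Sum.inr (Fin.ext (by simp [h0.symm]))
      · rw [dif_neg h0, Sum.elim_inr]
        exact congrArg Sum.inr (Fin.ext (by simp; omega))
  right_inv a := by
    match a with
    | Sum.inl r =>
      simp only [Sum.elim_inl]
      by_cases h0 : (r : ℕ) = s
      · rw [dif_pos h0, Sum.elim_inr, dif_pos (by simp)]
        exact congrArg Sum.inl (Fin.ext (by simp; omega))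
      · rw [dif_neg h0, Sum.elim_inl]
        exact congrArg Sum.inl (Fin.ext (by simp))
    | Sum.inr p =>
      simp only [Sum.elim_inr]
      rw [dif_neg (by simp)]
      exact congrArg Sum.inr (Fin.ext (by simp))

lemma psiEquiv_inl (s : ℕ) (b : Fin s) :
    psiEquiv s (Sum.inl b) = Sum.inl b.castSucc := rfl

lemma psiEquiv_inr_zero (s : ℕ) :
    psiEquiv s (Sum.inr (0 : Fin (s + 1))) = Sum.inl (Fin.last s) := by
  simp only [psiEquiv, Equiv.coe_fn_mk, Sum.elim_inr]
  rw [dif_pos (by simp)]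

lemma psiEquiv_inr_succ (s : ℕ) (p : Fin s) :
    psiEquiv s (Sum.inr p.succ) = Sum.inr p := by
  simp only [psiEquiv, Equiv.coe_fn_mk, Sum.elim_inr]
  rw [dif_neg (by simp)]
  exact congrArg Sum.inr (Fin.ext (by simp))

/-- `EALL` applied to the unit vector at `inl (last s)` gives `(-1)^s` times the small
`(i,j)`-minor. -/
lemma EA_LL1 (x : ℕ × ℕ → R) (s d c : ℕ) (ri kr js : Fin s → ℕ) :
    EALL x s d c ri kr js (EAunit s (Sum.inl (Fin.last s)))
      = (-1) ^ s * (Matrix.of fun p q : Fin s => x (ri p, js q)).det := by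
  classical
  unfold EALL
  set A3 : Matrix (Fin (s + 1)) (Fin (s + 1)) R :=
    Matrix.of (Fin.cons (α := fun _ => Fin (s + 1) → R)
      (fun b => if Fin.last s = b then 1 else 0)
      (fun a' b => x (Fin.snoc (α := fun _ => ℕ) ri d b, js a'))) with hA3
  set B3 : Matrix (Fin (s + 1)) (Fin s) R :=
    Matrix.of (Fin.cons (α := fun _ => Fin s → R)
      (fun _ => 0) (fun a' b => x (kr b, js a'))) with hB3
  have hupd : (EAM0 x s d c ri kr js).updateRow (Sum.inl 0) (EAunit s (Sum.inl (Fin.last s)))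
      = Matrix.fromBlocks A3 B3 0 1 := by
    ext (a | a) (b | b)
    · by_cases h : a = 0
      · subst h
        rw [Matrix.updateRow_self]
        simp only [EAunit, Matrix.fromBlocks_apply₁₁, hA3, Matrix.of_apply, Fin.cons_zero,
          Sum.inl.injEq]
      · rw [Matrix.updateRow_ne (fun hc => h (by injection hc))]
        obtain ⟨a', rfl⟩ := Fin.eq_succ_of_ne_zero h
        simp only [EAM0, Matrix.of_apply, Sum.elim_inl, Fin.cons_succ, hA3,
          Matrix.fromBlocks_apply₁₁]
        rfl
    · by_cases h : a = 0
      · subst h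
        rw [Matrix.updateRow_self]
        simp only [EAunit, Matrix.fromBlocks_apply₁₂, hB3, Matrix.of_apply, Fin.cons_zero]
        rw [if_neg (by simp)]
      · rw [Matrix.updateRow_ne (fun hc => h (by injection hc))]
        obtain ⟨a', rfl⟩ := Fin.eq_succ_of_ne_zero h
        simp only [EAM0, Matrix.of_apply, Sum.elim_inl, Fin.cons_succ, hB3,
          Matrix.fromBlocks_apply₁₂]
        rfl
    · rw [Matrix.updateRow_ne (by simp)]
      simp [EAM0, EAunit, Matrix.fromBlocks]
    · rw [Matrix.updateRow_ne (by simp)]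
      simp [EAM0, EAunit, Matrix.fromBlocks, Matrix.one_apply]
  rw [hupd, Matrix.det_fromBlocks_zero₂₁, Matrix.det_one, mul_one]
  rw [Matrix.det_succ_row_zero]
  rw [Finset.sum_eq_single (Fin.last s)]
  · have h00 : A3 0 (Fin.last s) = 1 := by
      simp only [hA3, Matrix.of_apply, Fin.cons_zero]
      simp
    rw [h00, mul_one, Fin.val_last]
    congr 1
    rw [← Matrix.det_transpose]
    congr 1
    ext a' b'
    simp only [Matrix.transpose_apply, Matrix.submatrix_apply, Fin.succAbove_last, hA3,
      Matrix.of_apply, Fin.cons_succ, Fin.snoc_castSucc]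
  · intro b _ hb
    have h0b : A3 0 b = 0 := by
      simp only [hA3, Matrix.of_apply, Fin.cons_zero]
      rw [if_neg (fun hc => hb hc.symm)]
    rw [h0b, mul_zero, zero_mul]
  · intro h; exact absurd (Finset.mem_univ _) h

end ExchangeEval2

section ExchangeEval3

variable {R : Type*} [CommRing R]

lemma EAu_zero (x : ℕ × ℕ → R) (s d c : ℕ) (ri kr ls : Fin s → ℕ) :
    EAu x s d c ri kr ls 0 = EAw x s d ri kr c := by
  simp only [EAu, Fin.cons_zero]

lemma EAu_succ (x : ℕ × ℕ → R) (s d c : ℕ) (ri kr ls : Fin s → ℕ) (z : Fin (s + 1 + s)) :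
    EAu x s d c ri kr ls z.succ = EAgg x s d ri kr ls (expSum s z) := by
  simp only [EAu, Fin.cons_succ]

/-- Row at position `inl (last s)`: the `w c` vector (for `1 ≤ y`). -/
lemma EA_row_inl_last (x : ℕ × ℕ → R) (s d c : ℕ) (ri kr ls : Fin s → ℕ)
    (y : Fin (s + 1 + s + 1)) (hy1 : 1 ≤ (y : ℕ)) :
    EAu x s d c ri kr ls (y.succAbove ((expSum s).symm (Sum.inl (Fin.last s))))
      = EAw x s d ri kr c := by
  rw [expSum_symm_inl_last]
  rw [Fin.succAbove_of_castSucc_lt y (⟨0, by omega⟩ : Fin (s + 1 + s)) (by rw [Fin.lt_def]; exact hy1)]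
  have h0 : Fin.castSucc (⟨0, by omega⟩ : Fin (s + 1 + s)) = (0 : Fin (s + 1 + s + 1)) :=
    Fin.ext (by simp)
  rw [h0, EAu_zero]

/-- Row at position `inr p`: the `w (ls p)` vector (for `y ≤ s+1`). -/
lemma EA_row_inr (x : ℕ × ℕ → R) (s d c : ℕ) (ri kr ls : Fin s → ℕ)
    (y : Fin (s + 1 + s + 1)) (hy2 : (y : ℕ) ≤ s + 1) (p : Fin s) :
    EAu x s d c ri kr ls (y.succAbove ((expSum s).symm (Sum.inr p)))
      = EAw x s d ri kr (ls p) := by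
  rw [expSum_symm_inr]
  rw [Fin.succAbove_of_le_castSucc _ _ (by simp [Fin.le_def]; omega)]
  rw [EAu_succ]
  rw [expSum_apply_high s _ (by simp; omega)]
  have hp : (⟨s + 1 + (p : ℕ) - (s + 1), by have := p.isLt; omega⟩ : Fin s) = p :=
    Fin.ext (by simp)
  rw [hp]
  rfl

/-- Row at position `inl r`, `r ≠ last`, for `y = 1`: the unit vector at `inl r`. -/
lemma EA_row_inl_one (x : ℕ × ℕ → R) (s d c : ℕ) (ri kr ls : Fin s → ℕ)
    {r : Fin (s + 1)} (hr : r ≠ Fin.last s) :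
    EAu x s d c ri kr ls ((⟨1, by omega⟩ : Fin (s + 1 + s + 1)).succAbove
      ((expSum s).symm (Sum.inl r))) = EAunit s (Sum.inl r) := by
  have hrs : (r : ℕ) < s := by
    have := r.isLt
    rcases Nat.lt_or_ge (r : ℕ) s with h | h
    · exact h
    · exact absurd (Fin.ext (by simp; omega) : r = Fin.last s) hr
  rw [expSum_symm_inl s hr]
  rw [Fin.succAbove_of_le_castSucc _ _ (by simp [Fin.le_def])]
  rw [EAu_succ]
  rw [expSum_apply_low s _ (by simp) (by simp; omega)]
  have he : (⟨(r : ℕ) + 1 - 1, by omega⟩ : Fin (s + 1)) = r := Fin.ext (by simp)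
  rw [he]
  rfl

/-- Row at position `inl r`, `r ≠ last`, for `2 ≤ y ≤ s+1`: a unit vector avoiding
coordinate `inl ⟨y-2⟩`. -/
lemma EA_row_inl_J2 (x : ℕ × ℕ → R) (s d c : ℕ) (ri kr ls : Fin s → ℕ)
    (y : Fin (s + 1 + s + 1)) (hy1 : 2 ≤ (y : ℕ)) (hy2 : (y : ℕ) ≤ s + 1)
    {r : Fin (s + 1)} (hr : r ≠ Fin.last s) :
    ∃ i' : Fin (s + 1), (i' : ℕ) ≠ (y : ℕ) - 2 ∧
      EAu x s d c ri kr ls (y.succAbove ((expSum s).symm (Sum.inl r)))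
        = EAunit s (Sum.inl i') := by
  have hrs : (r : ℕ) < s := by
    have := r.isLt
    rcases Nat.lt_or_ge (r : ℕ) s with h | h
    · exact h
    · exact absurd (Fin.ext (by simp; omega) : r = Fin.last s) hr
  rw [expSum_symm_inl s hr]
  by_cases hlt : (r : ℕ) + 1 < (y : ℕ)
  · rw [Fin.succAbove_of_castSucc_lt _ _ (by simp [Fin.lt_def]; omega)]
    have hcs : Fin.castSucc (⟨(r : ℕ) + 1, by omega⟩ : Fin (s + 1 + s))
        = (⟨(r : ℕ), by omega⟩ : Fin (s + 1 + s)).succ := Fin.ext (by simp)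
    rw [hcs, EAu_succ]
    by_cases hr0 : (r : ℕ) = 0
    · rw [expSum_apply_zero s _ (by simpa using hr0)]
      exact ⟨Fin.last s, by simp; omega, rfl⟩
    · rw [expSum_apply_low s _ (by simpa using hr0) (by simp; omega)]
      exact ⟨⟨(r : ℕ) - 1, by omega⟩, by simp; omega, rfl⟩
  · rw [Fin.succAbove_of_le_castSucc _ _ (by simp [Fin.le_def]; omega)]
    rw [EAu_succ]
    rw [expSum_apply_low s _ (by simp) (by simp; omega)]
    refine ⟨⟨(r : ℕ) + 1 - 1, by omega⟩, by simp; omega, rfl⟩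

end ExchangeEval3

section ExchangeEval4

variable {R : Type*} [CommRing R]

/-- `LL` at the `J1`-terms `y ≥ s+2`. -/
lemma EA_LLJ1 (x : ℕ × ℕ → R) (s d c : ℕ) (ri kr js ls : Fin s → ℕ)
    (y : Fin (s + 1 + s + 1)) (hy : s + 2 ≤ (y : ℕ)) :
    EALL x s d c ri kr js (EAu x s d c ri kr ls y)
      = (Matrix.of fun p q : Fin (s + 1) =>
          x (Fin.snoc (α := fun _ => ℕ) ri d p,
            Fin.cons (α := fun _ => ℕ)
              (ls ⟨(y : ℕ) - (s + 2), by have := y.isLt; omega⟩) js q)).det := by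
  have hyval : y = (⟨(y : ℕ) - 1, by have := y.isLt; omega⟩ : Fin (s + 1 + s)).succ :=
    Fin.ext (by simp; omega)
  conv_lhs => rw [hyval]
  rw [EAu_succ]
  rw [expSum_apply_high s _ (by simp; omega)]
  have hp : (⟨(y : ℕ) - 1 - (s + 1), by have := y.isLt; omega⟩ : Fin s)
      = ⟨(y : ℕ) - (s + 2), by have := y.isLt; omega⟩ := Fin.ext (by simp; omega)
  rw [hp]
  have hgg : EAgg x s d ri kr ls (Sum.inr ⟨(y : ℕ) - (s + 2), by have := y.isLt; omega⟩)
      = EAw x s d ri kr (ls ⟨(y : ℕ) - (s + 2), by have := y.isLt; omega⟩) := rfl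
  rw [hgg, EA_LL_w]

/-- Evaluation of the first complementary bracket. -/
lemma EA_BK1 (x : ℕ × ℕ → R) (s d c : ℕ) (ri kr ls : Fin s → ℕ) :
    EABK x s d c ri kr ls ⟨1, by omega⟩
      = (-1) ^ s * (Matrix.of fun p q : Fin (s + 1) =>
          x (Fin.snoc (α := fun _ => ℕ) kr d p, Fin.cons (α := fun _ => ℕ) c ls q)).det := by
  classical
  unfold EABK
  set y1 : Fin (s + 1 + s + 1) := ⟨1, by omega⟩ with hy1def
  set N : Matrix (Fin (s + 1) ⊕ Fin s) (Fin (s + 1) ⊕ Fin s) R :=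
    Matrix.of fun a i => EAu x s d c ri kr ls (y1.succAbove ((expSum s).symm a)) i with hNdef
  have hrow_last : N (Sum.inl (Fin.last s)) = EAw x s d ri kr c := by
    funext i
    simp only [hNdef, Matrix.of_apply]
    rw [EA_row_inl_last x s d c ri kr ls y1 (by simp [hy1def])]
  have hrow_inl : ∀ b : Fin s, N (Sum.inl b.castSucc) = EAunit s (Sum.inl b.castSucc) := by
    intro b
    funext i
    simp only [hNdef, Matrix.of_apply]
    rw [EA_row_inl_one x s d c ri kr ls (Fin.castSucc_lt_last b).ne]
  have hrow_inr : ∀ p : Fin s, N (Sum.inr p) = EAw x s d ri kr (ls p) := by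
    intro p
    funext i
    simp only [hNdef, Matrix.of_apply]
    rw [EA_row_inr x s d c ri kr ls y1 (by simp [hy1def]) p]
  -- reindex along psiEquiv
  rw [show N.det = (N.submatrix (psiEquiv s) (psiEquiv s)).det from
    (Matrix.det_submatrix_equiv_self (psiEquiv s) N).symm]
  have hblk : N.submatrix (psiEquiv s) (psiEquiv s) =
      Matrix.fromBlocks 1 0
        (Matrix.of fun (j : Fin (s + 1)) (b : Fin s) =>
          x (ri b, Fin.cons (α := fun _ => ℕ) c ls j))
        (Matrix.of fun (j j' : Fin (s + 1)) =>
          x (Fin.cons (α := fun _ => ℕ) d kr j', Fin.cons (α := fun _ => ℕ) c ls j)) := by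
    ext (b | j) (b' | j')
    · simp only [Matrix.submatrix_apply, psiEquiv_inl, Matrix.fromBlocks_apply₁₁]
      rw [hrow_inl b]
      simp only [EAunit, Sum.inl.injEq, Fin.castSucc_inj, Matrix.one_apply]
    · simp only [Matrix.submatrix_apply, psiEquiv_inl, Matrix.fromBlocks_apply₁₂]
      rw [hrow_inl b]
      induction j' using Fin.cases with
      | zero =>
          rw [psiEquiv_inr_zero]
          simp only [EAunit, Matrix.zero_apply]
          rw [if_neg (by simp [Fin.ext_iff]; omega)]
      | succ p =>
          rw [psiEquiv_inr_succ]
          simp only [EAunit, Matrix.zero_apply]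
          rw [if_neg (by simp)]
    · simp only [Matrix.submatrix_apply, psiEquiv_inl, Matrix.fromBlocks_apply₂₁,
        Matrix.of_apply]
      induction j using Fin.cases with
      | zero =>
          rw [psiEquiv_inr_zero, hrow_last]
          simp only [EAw, EAnu, Sum.elim_inl, Fin.snoc_castSucc, Fin.cons_zero]
      | succ p =>
          rw [psiEquiv_inr_succ, hrow_inr]
          simp only [EAw, EAnu, Sum.elim_inl, Fin.snoc_castSucc, Fin.cons_succ]
    · simp only [Matrix.submatrix_apply, Matrix.fromBlocks_apply₂₂, Matrix.of_apply]
      induction j using Fin.cases with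
      | zero =>
          rw [psiEquiv_inr_zero, hrow_last]
          induction j' using Fin.cases with
          | zero =>
              rw [psiEquiv_inr_zero]
              simp only [EAw, EAnu, Sum.elim_inl, Fin.snoc_last, Fin.cons_zero]
          | succ p =>
              rw [psiEquiv_inr_succ]
              simp only [EAw, EAnu, Sum.elim_inr, Fin.cons_succ, Fin.cons_zero]
      | succ p =>
          rw [psiEquiv_inr_succ, hrow_inr]
          induction j' using Fin.cases with
          | zero =>
              rw [psiEquiv_inr_zero]
              simp only [EAw, EAnu, Sum.elim_inl, Fin.snoc_last, Fin.cons_zero, Fin.cons_succ]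
          | succ p' =>
              rw [psiEquiv_inr_succ]
              simp only [EAw, EAnu, Sum.elim_inr, Fin.cons_succ]
  rw [hblk, Matrix.det_fromBlocks_zero₁₂, Matrix.det_one, one_mul]
  -- now relate the two orientations
  have hrot : ∀ p : Fin (s + 1), Fin.snoc (α := fun _ => ℕ) kr d p
      = Fin.cons (α := fun _ => ℕ) d kr (finRotate (s + 1) p) := by
    intro p
    induction p using Fin.lastCases with
    | last => rw [finRotate_last]; simp
    | cast i => rw [finRotate_succ_apply, Fin.coeSucc_eq_succ]; simp
  have hsnoc : (Matrix.of fun p q : Fin (s + 1) =>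
      x (Fin.snoc (α := fun _ => ℕ) kr d p, Fin.cons (α := fun _ => ℕ) c ls q)) =
      ((Matrix.of fun p q : Fin (s + 1) =>
        x (Fin.cons (α := fun _ => ℕ) d kr p, Fin.cons (α := fun _ => ℕ) c ls q)).submatrix
          (finRotate (s + 1)) id) := by
    ext p q
    simp only [Matrix.of_apply, Matrix.submatrix_apply, id_eq, hrot]
  rw [hsnoc, Matrix.det_permute, sign_finRotate]
  rw [← Matrix.det_transpose]
  have htrans : (Matrix.of fun (j j' : Fin (s + 1)) =>
      x (Fin.cons (α := fun _ => ℕ) d kr j', Fin.cons (α := fun _ => ℕ) c ls j))ᵀ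
      = (Matrix.of fun p q : Fin (s + 1) =>
          x (Fin.cons (α := fun _ => ℕ) d kr p, Fin.cons (α := fun _ => ℕ) c ls q)) := by
    ext p q; rfl
  rw [htrans]
  push_cast
  rw [← mul_assoc, ← mul_pow]
  norm_num
end ExchangeEval4

section ExchangeEval5

variable {R : Type*} [CommRing R]

/-- The `J2`-terms: for `2 ≤ y ≤ s+1` the complementary bracket `BK y` lies in any ideal
containing the corresponding exchanged minor. -/
lemma EA_BKJ2 (x : ℕ × ℕ → R) (s d c : ℕ) (ri kr ls : Fin s → ℕ)
    (y : Fin (s + 1 + s + 1)) (hy1 : 2 ≤ (y : ℕ)) (hy2 : (y : ℕ) ≤ s + 1)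
    (I : Ideal R)
    (hgen : (Matrix.of fun a b : Fin (s + 1) =>
        x (Fin.cons (α := fun _ => ℕ) (ri ⟨(y : ℕ) - 2, by omega⟩) kr b,
          Fin.cons (α := fun _ => ℕ) c ls a)).det ∈ I) :
    EABK x s d c ri kr ls y ∈ I := by
  classical
  unfold EABK
  set N : Matrix (Fin (s + 1) ⊕ Fin s) (Fin (s + 1) ⊕ Fin s) R :=
    Matrix.of fun a i => EAu x s d c ri kr ls (y.succAbove ((expSum s).symm a)) i with hNdef
  set qq : Fin s := ⟨(y : ℕ) - 2, by omega⟩ with hqq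
  set cs : Fin (s + 1) → (Fin (s + 1) ⊕ Fin s) :=
    Fin.cons (α := fun _ => Fin (s + 1) ⊕ Fin s) (Sum.inl qq.castSucc) Sum.inr with hcs
  have hcsinj : Function.Injective cs := by
    intro g1 g2 h
    induction g1 using Fin.cases with
    | zero =>
        induction g2 using Fin.cases with
        | zero => rfl
        | succ p2 => rw [hcs] at h; simp only [Fin.cons_zero, Fin.cons_succ] at h; exact absurd h (by simp)
    | succ p1 =>
        induction g2 using Fin.cases with
        | zero => rw [hcs] at h; simp only [Fin.cons_zero, Fin.cons_succ] at h; exact absurd h (by simp)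
        | succ p2 =>
            rw [hcs] at h; simp only [Fin.cons_succ, Sum.inr.injEq] at h
            rw [h]
  refine det_mem_of_unit_rows N (psiEquiv s) cs hcsinj ?_ I ?_
  · intro b
    obtain ⟨i', hi', hrow⟩ := EA_row_inl_J2 x s d c ri kr ls y hy1 hy2
      (Fin.castSucc_lt_last b).ne
    refine ⟨Sum.inl i', ?_, ?_⟩
    · intro g
      induction g using Fin.cases with
      | zero =>
          rw [hcs]
          simp only [Fin.cons_zero, ne_eq, Sum.inl.injEq]
          intro hc
          exact hi' (by rw [hc]; simp [hqq])
      | succ p => rw [hcs]; simp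
    · funext j
      simp only [hNdef, Matrix.of_apply, psiEquiv_inl]
      rw [hrow]
      rfl
  · have hsurv : (Matrix.of fun (a b : Fin (s + 1)) =>
        N (psiEquiv s (Sum.inr a)) (cs b)) =
        (Matrix.of fun a b : Fin (s + 1) =>
          x (Fin.cons (α := fun _ => ℕ) (ri qq) kr b,
            Fin.cons (α := fun _ => ℕ) c ls a)) := by
      ext a b
      simp only [Matrix.of_apply]
      have hrowval : N (psiEquiv s (Sum.inr a))
          = EAw x s d ri kr (Fin.cons (α := fun _ => ℕ) c ls a) := by
        induction a using Fin.cases with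
        | zero =>
            rw [psiEquiv_inr_zero]
            funext i
            simp only [hNdef, Matrix.of_apply]
            rw [EA_row_inl_last x s d c ri kr ls y (by omega)]
            simp
        | succ p =>
            rw [psiEquiv_inr_succ]
            funext i
            simp only [hNdef, Matrix.of_apply]
            rw [EA_row_inr x s d c ri kr ls y hy2 p]
            simp
      rw [hrowval]
      induction b using Fin.cases with
      | zero =>
          rw [hcs]
          simp only [Fin.cons_zero, EAw, EAnu, Sum.elim_inl, Fin.snoc_castSucc]
      | succ p =>
          rw [hcs]
          simp only [Fin.cons_succ, EAw, EAnu, Sum.elim_inr]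
    rw [hsurv]
    exact hgen

end ExchangeEval5

section ExchangeAssembly

variable {R : Type*} [CommRing R]

/-- The assembled generic exchange lemma: over any commutative ring, the exchange expression
lies in any ideal containing the `J1`- and `J2`-minors. -/
lemma EA_main (x : ℕ × ℕ → R) (s : ℕ) (d c : ℕ) (ri kr js ls : Fin s → ℕ)
    (I : Ideal R)
    (hJ1 : ∀ pp : Fin s, (Matrix.of fun p q : Fin (s + 1) =>
      x (Fin.snoc (α := fun _ => ℕ) ri d p,
        Fin.cons (α := fun _ => ℕ) (ls pp) js q)).det ∈ I)
    (hJ2 : ∀ qq : Fin s, (Matrix.of fun a b : Fin (s + 1) =>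
      x (Fin.cons (α := fun _ => ℕ) (ri qq) kr b,
        Fin.cons (α := fun _ => ℕ) c ls a)).det ∈ I) :
    (Matrix.of fun p q : Fin (s + 1) =>
        x (Fin.snoc (α := fun _ => ℕ) ri d p, Fin.cons (α := fun _ => ℕ) c js q)).det *
      (Matrix.of fun p q : Fin s => x (kr p, ls q)).det -
    (Matrix.of fun p q : Fin (s + 1) =>
        x (Fin.snoc (α := fun _ => ℕ) kr d p, Fin.cons (α := fun _ => ℕ) c ls q)).det *
      (Matrix.of fun p q : Fin s => x (ri p, js q)).det ∈ I := by
  classical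
  set f : Fin (s + 1 + s + 1) → R := fun y =>
    (-1) ^ (y : ℕ) * EALL x s d c ri kr js (EAu x s d c ri kr ls y)
      * EABK x s d c ri kr ls y with hf
  have hkey : ∑ y : Fin (s + 1 + s + 1), f y = 0 := EA_key x s d c ri kr js ls
  set y0 : Fin (s + 1 + s + 1) := 0 with hy0
  set y1 : Fin (s + 1 + s + 1) := ⟨1, by omega⟩ with hy1
  have hy1mem : y1 ∈ Finset.univ.erase y0 := by
    rw [Finset.mem_erase]
    exact ⟨by rw [hy0, hy1, Fin.ne_iff_vne]; simp, Finset.mem_univ _⟩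
  have hsplit : f y0 + (f y1 + ∑ y ∈ (Finset.univ.erase y0).erase y1, f y) = 0 := by
    rw [Finset.add_sum_erase _ f hy1mem, Finset.add_sum_erase _ f (Finset.mem_univ y0)]
    exact hkey
  -- term 0
  have hfy0 : f y0 = (Matrix.of fun p q : Fin (s + 1) =>
        x (Fin.snoc (α := fun _ => ℕ) ri d p, Fin.cons (α := fun _ => ℕ) c js q)).det *
      (Matrix.of fun p q : Fin s => x (kr p, ls q)).det := by
    simp only [hf, hy0]
    rw [EA_LL0, EA_BK0]
    norm_num
  -- term 1
  have hps : ((-1 : R)) ^ (s + s) = 1 := by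
    rw [← two_mul, pow_mul]; norm_num
  have hfy1 : f y1 = -((Matrix.of fun p q : Fin (s + 1) =>
        x (Fin.snoc (α := fun _ => ℕ) kr d p, Fin.cons (α := fun _ => ℕ) c ls q)).det *
      (Matrix.of fun p q : Fin s => x (ri p, js q)).det) := by
    rw [hf]
    have hy1succ : y1 = (⟨0, by omega⟩ : Fin (s + 1 + s)).succ := Fin.ext (by simp [hy1]; exact (Nat.mod_eq_of_lt (by omega)).symm)
    have hu1 : EAu x s d c ri kr ls y1 = EAunit s (Sum.inl (Fin.last s)) := by
      rw [hy1succ, EAu_succ, expSum_apply_zero s _ (by simp)]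
      rfl
    have hbk1 : EABK x s d c ri kr ls y1 = (-1) ^ s *
        (Matrix.of fun p q : Fin (s + 1) =>
          x (Fin.snoc (α := fun _ => ℕ) kr d p, Fin.cons (α := fun _ => ℕ) c ls q)).det := by
      rw [hy1]; exact EA_BK1 x s d c ri kr ls
    simp only [hf]
    rw [hu1, EA_LL1, hbk1]
    rw [show ((-1 : R)) ^ ((y1 : ℕ)) = -1 by rw [show ((y1 : ℕ)) = 1 by simp [hy1], pow_one]]
    set A := (Matrix.of fun p q : Fin s => x (ri p, js q)).det
    set B := (Matrix.of fun p q : Fin (s + 1) =>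
      x (Fin.snoc (α := fun _ => ℕ) kr d p, Fin.cons (α := fun _ => ℕ) c ls q)).det
    calc -1 * ((-1) ^ s * A) * ((-1) ^ s * B)
        = -((-1) ^ (s + s) * (B * A)) := by ring
      _ = -(B * A) := by rw [hps, one_mul]
  -- the rest lies in I
  have hrest : ∀ y ∈ (Finset.univ.erase y0).erase y1, f y ∈ I := by
    intro y hy
    rw [Finset.mem_erase, Finset.mem_erase] at hy
    have hv0 : (y : ℕ) ≠ 0 := by
      intro hc; exact hy.2.1 (Fin.ext (by simp [hy0, hc]))
    have hv1 : (y : ℕ) ≠ 1 := by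
      intro hc; exact hy.1 (Fin.ext (by simp [hy1, hc]))
    have hge2 : 2 ≤ (y : ℕ) := by omega
    rcases le_or_gt ((y : ℕ)) (s + 1) with hle | hgt
    · -- J2 term
      have hBK : EABK x s d c ri kr ls y ∈ I :=
        EA_BKJ2 x s d c ri kr ls y hge2 hle I (hJ2 ⟨(y : ℕ) - 2, by omega⟩)
      simp only [hf]
      exact Ideal.mul_mem_left _ _ hBK
    · -- J1 term
      have hLL : EALL x s d c ri kr js (EAu x s d c ri kr ls y) ∈ I := by
        rw [EA_LLJ1 x s d c ri kr js ls y (by omega)]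
        exact hJ1 _
      simp only [hf]
      exact Ideal.mul_mem_right _ _ (Ideal.mul_mem_left _ _ hLL)
  have hfinal : (Matrix.of fun p q : Fin (s + 1) =>
        x (Fin.snoc (α := fun _ => ℕ) ri d p, Fin.cons (α := fun _ => ℕ) c js q)).det *
      (Matrix.of fun p q : Fin s => x (kr p, ls q)).det -
    (Matrix.of fun p q : Fin (s + 1) =>
        x (Fin.snoc (α := fun _ => ℕ) kr d p, Fin.cons (α := fun _ => ℕ) c ls q)).det *
      (Matrix.of fun p q : Fin s => x (ri p, js q)).det
      = -∑ y ∈ (Finset.univ.erase y0).erase y1, f y := by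
    linear_combination hsplit - hfy0 - hfy1
  rw [hfinal]
  exact I.neg_mem (Ideal.sum_mem I hrest)

end ExchangeAssembly

section LadderGeometry

/-- The ladder property of `L`: the rectangle determined by two points of `L` lies in `L`. -/
lemma LadderData.mem_of_between (D : LadderData) {p1 p2 : ℕ × ℕ}
    (h1 : p1 ∈ D.L) (h2 : p2 ∈ D.L) {r γ : ℕ}
    (ha : p1.1 ≤ r) (hb : r ≤ p2.1) (hc : p2.2 ≤ γ) (hd : γ ≤ p1.2) :
    ((r, γ) : ℕ × ℕ) ∈ D.L := by
  simp only [LadderData.L, Set.mem_setOf_eq] at h1 h2 ⊢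
  obtain ⟨i, j, hbi, hm, h1c, hai, h11, hdj, hcj, hn⟩ := h1
  obtain ⟨i', j', hbi', hm', h1c', hai', h11', hdj', hcj', hn'⟩ := h2
  exact ⟨i, j', by omega, by omega, by omega, by omega, by omega, by omega, by omega, by omega⟩

lemma minorOrZero_eq_det {K : Type*} [Field K] {V : Set (ℕ × ℕ)} {u : ℕ}
    (r cc : Fin u → ℕ) (h : ∀ p q, ((r p, cc q) : ℕ × ℕ) ∈ V) :
    minorOrZero K V r cc = (Matrix.of fun p q =>
      (MvPolynomial.X (⟨(r p, cc q), h p q⟩ : V) : MvPolynomial ↥V K)).det := by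
  unfold minorOrZero
  rw [dif_pos h]

lemma minorOrZero_eq_zero {K : Type*} [Field K] {V : Set (ℕ × ℕ)} {u : ℕ}
    (r cc : Fin u → ℕ) (h : ¬ ∀ p q, ((r p, cc q) : ℕ × ℕ) ∈ V) :
    minorOrZero K V r cc = 0 := by
  unfold minorOrZero
  rw [dif_neg h]

end LadderGeometry

section Regions

lemma dN_at_i0 (D : LadderData) (i0 : Fin D.k) :
    D.dN i0 ⟨(i0 : ℕ), by have := i0.isLt; omega⟩ = D.d i0 - 1 := by
  unfold LadderData.dN
  rw [dif_neg (lt_irrefl _), if_pos rfl]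

lemma cN_at_i0 (D : LadderData) (i0 : Fin D.k) :
    D.cN i0 ⟨(i0 : ℕ), by have := i0.isLt; omega⟩ = D.c i0 := by
  unfold LadderData.cN
  rw [dif_neg (lt_irrefl _), if_pos rfl]

lemma tN_at_i0 (D : LadderData) (i0 : Fin D.k) :
    D.tN i0 ⟨(i0 : ℕ), by have := i0.isLt; omega⟩ = D.t i0 := by
  unfold LadderData.tN
  rw [dif_pos (le_refl _)]

lemma dN_at_succ (D : LadderData) (i0 : Fin D.k) :
    D.dN i0 ⟨(i0 : ℕ) + 1, by have := i0.isLt; omega⟩ = D.d i0 := by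
  unfold LadderData.dN
  rw [dif_neg (by intro h; have h' : (i0 : ℕ) + 1 < (i0 : ℕ) := h; omega),
    if_neg (by intro h; have h' : (i0 : ℕ) + 1 = (i0 : ℕ) := h; omega), if_pos rfl]

lemma cN_at_succ (D : LadderData) (i0 : Fin D.k) :
    D.cN i0 ⟨(i0 : ℕ) + 1, by have := i0.isLt; omega⟩ = D.c i0 + 1 := by
  unfold LadderData.cN
  rw [dif_neg (by intro h; have h' : (i0 : ℕ) + 1 < (i0 : ℕ) := h; omega),
    if_neg (by intro h; have h' : (i0 : ℕ) + 1 = (i0 : ℕ) := h; omega), if_pos rfl]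

lemma tN_at_succ (D : LadderData) (i0 : Fin D.k) :
    D.tN i0 ⟨(i0 : ℕ) + 1, by have := i0.isLt; omega⟩ = D.t i0 := by
  unfold LadderData.tN
  rw [dif_neg (by intro h; have h' : (i0 : ℕ) + 1 ≤ (i0 : ℕ) := h; omega)]
  exact congrArg D.t (Fin.ext rfl)

end Regions

section MainLemma

open MvPolynomial

/-- The main case of the exchange lemma: all four minors have their entries in `L` and
the mixed entries `(ri, ls)` also lie in `L`. -/
lemma exchange_main_full {K : Type*} [Field K] (D : LadderData) (i0 : Fin D.k)
    (s : ℕ) (hs : s + 1 = D.t i0)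
    (ri kr js ls : Fin s → ℕ)
    (hrid : ∀ p, ri p < D.d i0) (hkrd : ∀ p, kr p < D.d i0)
    (hjsc : ∀ q, D.c i0 < js q) (hlsc : ∀ q, D.c i0 < ls q)
    (F1 : ∀ p q, ((Fin.snoc (α := fun _ => ℕ) ri (D.d i0) p,
      Fin.cons (α := fun _ => ℕ) (D.c i0) js q) : ℕ × ℕ) ∈ D.L)
    (F3 : ∀ p q, ((Fin.snoc (α := fun _ => ℕ) kr (D.d i0) p,
      Fin.cons (α := fun _ => ℕ) (D.c i0) ls q) : ℕ × ℕ) ∈ D.L)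
    (Hmix : ∀ p q, ((ri p, ls q) : ℕ × ℕ) ∈ D.L) :
    minorOrZero K D.L (Fin.snoc ri (D.d i0)) (Fin.cons (D.c i0) js) *
        minorOrZero K D.L kr ls -
      minorOrZero K D.L (Fin.snoc kr (D.d i0)) (Fin.cons (D.c i0) ls) *
        minorOrZero K D.L ri js ∈ D.IτN i0 K := by
  classical
  have F4 : ∀ p q, ((ri p, js q) : ℕ × ℕ) ∈ D.L := by
    intro p q
    have := F1 p.castSucc q.succ
    rwa [Fin.snoc_castSucc, Fin.cons_succ] at this
  have F2 : ∀ p q, ((kr p, ls q) : ℕ × ℕ) ∈ D.L := by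
    intro p q
    have := F3 p.castSucc q.succ
    rwa [Fin.snoc_castSucc, Fin.cons_succ] at this
  set x : ℕ × ℕ → MvPolynomial ↥D.L K :=
    fun p => if h : p ∈ D.L then MvPolynomial.X (⟨p, h⟩ : D.L) else 0 with hx
  have hxap : ∀ (p : ℕ × ℕ) (h : p ∈ D.L), x p = MvPolynomial.X (⟨p, h⟩ : D.L) :=
    fun p h => dif_pos h
  have hm1 : minorOrZero K D.L (Fin.snoc ri (D.d i0)) (Fin.cons (D.c i0) js)
      = (Matrix.of fun p q : Fin (s + 1) =>
          x (Fin.snoc (α := fun _ => ℕ) ri (D.d i0) p,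
            Fin.cons (α := fun _ => ℕ) (D.c i0) js q)).det := by
    rw [minorOrZero_eq_det _ _ F1]
    congr 1
    ext p q
    rw [Matrix.of_apply, Matrix.of_apply, hxap _ (F1 p q)]
  have hm2 : minorOrZero K D.L kr ls
      = (Matrix.of fun p q : Fin s => x (kr p, ls q)).det := by
    rw [minorOrZero_eq_det _ _ F2]
    congr 1
    ext p q
    rw [Matrix.of_apply, Matrix.of_apply, hxap _ (F2 p q)]
  have hm3 : minorOrZero K D.L (Fin.snoc kr (D.d i0)) (Fin.cons (D.c i0) ls)
      = (Matrix.of fun p q : Fin (s + 1) =>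
          x (Fin.snoc (α := fun _ => ℕ) kr (D.d i0) p,
            Fin.cons (α := fun _ => ℕ) (D.c i0) ls q)).det := by
    rw [minorOrZero_eq_det _ _ F3]
    congr 1
    ext p q
    rw [Matrix.of_apply, Matrix.of_apply, hxap _ (F3 p q)]
  have hm4 : minorOrZero K D.L ri js
      = (Matrix.of fun p q : Fin s => x (ri p, js q)).det := by
    rw [minorOrZero_eq_det _ _ F4]
    congr 1
    ext p q
    rw [Matrix.of_apply, Matrix.of_apply, hxap _ (F4 p q)]
  rw [hm1, hm2, hm3, hm4]
  -- the two relevant components of `IτN`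
  have hl1lt : (i0 : ℕ) + 1 < D.k + 1 := by have := i0.isLt; omega
  have hl2lt : (i0 : ℕ) < D.k + 1 := by have := i0.isLt; omega
  have hJ1le : minorsIdeal K D.L
      {p ∈ D.Nset i0 | p.1 ≤ D.dN i0 ⟨(i0 : ℕ) + 1, hl1lt⟩ ∧
        D.cN i0 ⟨(i0 : ℕ) + 1, hl1lt⟩ ≤ p.2} (s + 1) ≤ D.IτN i0 K := by
    have h := le_iSup (fun l : Fin (D.k + 1) => minorsIdeal K D.L
      {p ∈ D.Nset i0 | p.1 ≤ D.dN i0 l ∧ D.cN i0 l ≤ p.2} (D.tN i0 l))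
      (⟨(i0 : ℕ) + 1, hl1lt⟩ : Fin (D.k + 1))
    rwa [show D.tN i0 ⟨(i0 : ℕ) + 1, hl1lt⟩ = s + 1 from (tN_at_succ D i0).trans hs.symm] at h
  have hJ2le : minorsIdeal K D.L
      {p ∈ D.Nset i0 | p.1 ≤ D.dN i0 ⟨(i0 : ℕ), hl2lt⟩ ∧
        D.cN i0 ⟨(i0 : ℕ), hl2lt⟩ ≤ p.2} (s + 1) ≤ D.IτN i0 K := by
    have h := le_iSup (fun l : Fin (D.k + 1) => minorsIdeal K D.L
      {p ∈ D.Nset i0 | p.1 ≤ D.dN i0 l ∧ D.cN i0 l ≤ p.2} (D.tN i0 l))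
      (⟨(i0 : ℕ), hl2lt⟩ : Fin (D.k + 1))
    rwa [show D.tN i0 ⟨(i0 : ℕ), hl2lt⟩ = s + 1 from (tN_at_i0 D i0).trans hs.symm] at h
  -- membership of entries in the two regions
  have hS1 : ∀ (pp : Fin s) (a b : Fin (s + 1)),
      ((Fin.snoc (α := fun _ => ℕ) ri (D.d i0) a,
        Fin.cons (α := fun _ => ℕ) (ls pp) js b) : ℕ × ℕ)
        ∈ {p ∈ D.Nset i0 | p.1 ≤ D.dN i0 ⟨(i0 : ℕ) + 1, hl1lt⟩ ∧
            D.cN i0 ⟨(i0 : ℕ) + 1, hl1lt⟩ ≤ p.2} := by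
    intro pp a b
    have hrow : Fin.snoc (α := fun _ => ℕ) ri (D.d i0) a ≤ D.d i0 := by
      induction a using Fin.lastCases with
      | last => rw [Fin.snoc_last]
      | cast i => rw [Fin.snoc_castSucc]; exact (hrid i).le
    have hcol : D.c i0 < Fin.cons (α := fun _ => ℕ) (ls pp) js b := by
      induction b using Fin.cases with
      | zero => rw [Fin.cons_zero]; exact hlsc pp
      | succ q => rw [Fin.cons_succ]; exact hjsc q
    have hL : ((Fin.snoc (α := fun _ => ℕ) ri (D.d i0) a,
        Fin.cons (α := fun _ => ℕ) (ls pp) js b) : ℕ × ℕ) ∈ D.L := by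
      induction a using Fin.lastCases with
      | last =>
          rw [Fin.snoc_last]
          induction b using Fin.cases with
          | zero =>
              rw [Fin.cons_zero]
              have := F3 (Fin.last s) pp.succ
              rwa [Fin.snoc_last, Fin.cons_succ] at this
          | succ q =>
              rw [Fin.cons_succ]
              have := F1 (Fin.last s) q.succ
              rwa [Fin.snoc_last, Fin.cons_succ] at this
      | cast i =>
          rw [Fin.snoc_castSucc]
          induction b using Fin.cases with
          | zero => rw [Fin.cons_zero]; exact Hmix i pp
          | succ q =>
              rw [Fin.cons_succ]
              have := F1 i.castSucc q.succ
              rwa [Fin.snoc_castSucc, Fin.cons_succ] at this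
    refine ⟨⟨hL, ?_⟩, ?_, ?_⟩
    · intro hc
      have h2 : Fin.cons (α := fun _ => ℕ) (ls pp) js b = D.c i0 := congrArg Prod.snd hc
      omega
    · rw [dN_at_succ]; exact hrow
    · rw [cN_at_succ]; omega
  have hS2 : ∀ (qq : Fin s) (b a : Fin (s + 1)),
      ((Fin.cons (α := fun _ => ℕ) (ri qq) kr b,
        Fin.cons (α := fun _ => ℕ) (D.c i0) ls a) : ℕ × ℕ)
        ∈ {p ∈ D.Nset i0 | p.1 ≤ D.dN i0 ⟨(i0 : ℕ), hl2lt⟩ ∧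
            D.cN i0 ⟨(i0 : ℕ), hl2lt⟩ ≤ p.2} := by
    intro qq b a
    have hrow : Fin.cons (α := fun _ => ℕ) (ri qq) kr b < D.d i0 := by
      induction b using Fin.cases with
      | zero => rw [Fin.cons_zero]; exact hrid qq
      | succ p => rw [Fin.cons_succ]; exact hkrd p
    have hcol : D.c i0 ≤ Fin.cons (α := fun _ => ℕ) (D.c i0) ls a := by
      induction a using Fin.cases with
      | zero => rw [Fin.cons_zero]
      | succ q => rw [Fin.cons_succ]; exact (hlsc q).le
    have hL : ((Fin.cons (α := fun _ => ℕ) (ri qq) kr b,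
        Fin.cons (α := fun _ => ℕ) (D.c i0) ls a) : ℕ × ℕ) ∈ D.L := by
      induction b using Fin.cases with
      | zero =>
          rw [Fin.cons_zero]
          induction a using Fin.cases with
          | zero =>
              rw [Fin.cons_zero]
              have := F1 qq.castSucc (0 : Fin (s + 1))
              rwa [Fin.snoc_castSucc, Fin.cons_zero] at this
          | succ q => rw [Fin.cons_succ]; exact Hmix qq q
      | succ p =>
          rw [Fin.cons_succ]
          induction a using Fin.cases with
          | zero =>
              rw [Fin.cons_zero]
              have := F3 p.castSucc (0 : Fin (s + 1))
              rwa [Fin.snoc_castSucc, Fin.cons_zero] at this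
          | succ q =>
              rw [Fin.cons_succ]
              have := F3 p.castSucc q.succ
              rwa [Fin.snoc_castSucc, Fin.cons_succ] at this
    refine ⟨⟨hL, ?_⟩, ?_, ?_⟩
    · intro hc
      have h1 : Fin.cons (α := fun _ => ℕ) (ri qq) kr b = D.d i0 := congrArg Prod.fst hc
      omega
    · rw [dN_at_i0]; omega
    · rw [cN_at_i0]; exact hcol
  -- apply the generic lemma
  apply EA_main x s (D.d i0) (D.c i0) ri kr js ls (D.IτN i0 K)
  · intro pp
    have hXform : (Matrix.of fun p q : Fin (s + 1) =>
        x (Fin.snoc (α := fun _ => ℕ) ri (D.d i0) p,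
          Fin.cons (α := fun _ => ℕ) (ls pp) js q))
        = (Matrix.of fun p q : Fin (s + 1) =>
            (MvPolynomial.X (⟨(Fin.snoc (α := fun _ => ℕ) ri (D.d i0) p,
              Fin.cons (α := fun _ => ℕ) (ls pp) js q),
              (hS1 pp p q).1.1⟩ : D.L) : MvPolynomial ↥D.L K)) := by
      ext p q
      rw [Matrix.of_apply, Matrix.of_apply, hxap _ ((hS1 pp p q).1.1)]
    rw [hXform]
    exact hJ1le (det_X_mem_minorsIdeal _ _ (fun a b => hS1 pp a b)
      (fun a b => (hS1 pp a b).1.1))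
  · intro qq
    rw [← Matrix.det_transpose]
    have hXform : (Matrix.of fun a b : Fin (s + 1) =>
        x (Fin.cons (α := fun _ => ℕ) (ri qq) kr b,
          Fin.cons (α := fun _ => ℕ) (D.c i0) ls a))ᵀ
        = (Matrix.of fun b a : Fin (s + 1) =>
            (MvPolynomial.X (⟨(Fin.cons (α := fun _ => ℕ) (ri qq) kr b,
              Fin.cons (α := fun _ => ℕ) (D.c i0) ls a),
              (hS2 qq b a).1.1⟩ : D.L) : MvPolynomial ↥D.L K)) := by
      ext b a
      rw [Matrix.transpose_apply, Matrix.of_apply, Matrix.of_apply, hxap _ ((hS2 qq b a).1.1)]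
    rw [hXform]
    exact hJ2le (det_X_mem_minorsIdeal _ _ (fun b a => hS2 qq b a)
      (fun b a => (hS2 qq b a).1.1))

end MainLemma
/-- **Lemma (exchange relation).** Fix `i` with `t_i ≥ 2`, `d_{i−1} < d_i`, `c_i < c_{i+1}`
and write `t = t_i`, `d = d_i`, `c = c_i`.  For row indices `i_1 < … < i_{t−1} < d`,
`k_1 < … < k_{t−1} < d` and column indices `c < j_1 < … < j_{t−1}`, `c < l_1 < … < l_{t−1}`,
the polynomial
`L_{i_*,d;c,j_*} · L_{k_*;l_*} − L_{k_*,d;c,l_*} · L_{i_*;j_*}`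
belongs to `I_τ(N) ⊆ K[L]` (minors involving entries outside `L` being `0`). -/
theorem exchange_relation_mem_IτN (K : Type*) [Field K]
    (D : LadderData) (hnd : D.Nondeg) (i0 : Fin D.k)
    (hd : D.dPrev i0 < D.d i0) (hc : D.c i0 < D.cNext i0)
    (s : ℕ) (hs1 : 1 ≤ s) (hs : s + 1 = D.t i0)
    (ri kr js ls : Fin s → ℕ)
    (hri : StrictMono ri) (hkr : StrictMono kr) (hjs : StrictMono js) (hls : StrictMono ls)
    (hrid : ∀ p, ri p < D.d i0) (hkrd : ∀ p, kr p < D.d i0)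
    (hjsc : ∀ q, D.c i0 < js q) (hjsn : ∀ q, js q ≤ D.n)
    (hlsc : ∀ q, D.c i0 < ls q) (hlsn : ∀ q, ls q ≤ D.n) :
    minorOrZero K D.L (Fin.snoc ri (D.d i0)) (Fin.cons (D.c i0) js) *
        minorOrZero K D.L kr ls -
      minorOrZero K D.L (Fin.snoc kr (D.d i0)) (Fin.cons (D.c i0) ls) *
        minorOrZero K D.L ri js
      ∈ D.IτN i0 K := by
  classical
  have hdpos := D.d_pos i0
  -- derivation of fullness of a big minor from fullness of the corner and small minor
  have hderive : ∀ (rr jj : Fin s → ℕ), (∀ q, D.c i0 < jj q) → (∀ p, rr p < D.d i0) →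
      ((D.d i0, D.c i0) : ℕ × ℕ) ∈ D.L → (∀ p q, ((rr p, jj q) : ℕ × ℕ) ∈ D.L) →
      ∀ p q, ((Fin.snoc (α := fun _ => ℕ) rr (D.d i0) p,
        Fin.cons (α := fun _ => ℕ) (D.c i0) jj q) : ℕ × ℕ) ∈ D.L := by
    intro rr jj hjj hrr hdc hF p q
    induction p using Fin.lastCases with
    | last =>
        rw [Fin.snoc_last]
        induction q using Fin.cases with
        | zero => rw [Fin.cons_zero]; exact hdc
        | succ q' =>
            rw [Fin.cons_succ]
            exact D.mem_of_between (hF ⟨0, hs1⟩ q') hdc (hrr _).le (le_refl _)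
              (hjj q').le (le_refl _)
    | cast p' =>
        rw [Fin.snoc_castSucc]
        induction q using Fin.cases with
        | zero =>
            rw [Fin.cons_zero]
            exact D.mem_of_between (hF p' ⟨0, hs1⟩) hdc (le_refl _) (hrr _).le
              (le_refl _) (hjj _).le
        | succ q' => rw [Fin.cons_succ]; exact hF p' q'
  by_cases F1 : ∀ p q, ((Fin.snoc (α := fun _ => ℕ) ri (D.d i0) p, Fin.cons (α := fun _ => ℕ) (D.c i0) js q) : ℕ × ℕ) ∈ D.L
  · by_cases F3 : ∀ p q, ((Fin.snoc (α := fun _ => ℕ) kr (D.d i0) p, Fin.cons (α := fun _ => ℕ) (D.c i0) ls q) : ℕ × ℕ) ∈ D.L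
    · -- both big minors full; small ones follow
      have F4 : ∀ p q, ((ri p, js q) : ℕ × ℕ) ∈ D.L := by
        intro p q
        have := F1 p.castSucc q.succ
        rwa [Fin.snoc_castSucc, Fin.cons_succ] at this
      have F2 : ∀ p q, ((kr p, ls q) : ℕ × ℕ) ∈ D.L := by
        intro p q
        have := F3 p.castSucc q.succ
        rwa [Fin.snoc_castSucc, Fin.cons_succ] at this
      have hdc : ((D.d i0, D.c i0) : ℕ × ℕ) ∈ D.L := by
        have := F1 (Fin.last s) 0
        rwa [Fin.snoc_last, Fin.cons_zero] at this
      by_cases Hmix : ∀ p q, ((ri p, ls q) : ℕ × ℕ) ∈ D.L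
      · exact exchange_main_full D i0 s hs ri kr js ls hrid hkrd hjsc hlsc F1 F3 Hmix
      · push_neg at Hmix
        obtain ⟨p0, q0, hnot⟩ := Hmix
        have Hmix' : ∀ p q, ((kr p, js q) : ℕ × ℕ) ∈ D.L := by
          intro p q
          by_cases hle : js q ≤ ls q0
          · exact D.mem_of_between (F2 p q0) hdc (le_refl _) (hkrd p).le (hjsc q).le hle
          · by_cases hle2 : ri p0 ≤ kr p
            · exact D.mem_of_between (F4 p0 q) hdc hle2 (hkrd p).le (hjsc q).le (le_refl _)
            · exfalso
              exact hnot (D.mem_of_between (F2 p q0) hdc (by omega) (hrid p0).le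
                (hlsc q0).le (le_refl _))
        have h := exchange_main_full (K := K) D i0 s hs kr ri ls js hkrd hrid hlsc hjsc F3 F1 Hmix'
        have h2 := (D.IτN i0 K).neg_mem h
        rwa [neg_sub] at h2
    · -- bigK not full
      rw [minorOrZero_eq_zero _ _ F3, zero_mul]
      by_cases F2 : ∀ p q, ((kr p, ls q) : ℕ × ℕ) ∈ D.L
      · -- F1 and F2 would imply F3
        exfalso
        have hdc : ((D.d i0, D.c i0) : ℕ × ℕ) ∈ D.L := by
          have := F1 (Fin.last s) 0
          rwa [Fin.snoc_last, Fin.cons_zero] at this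
        exact F3 (hderive kr ls hlsc hkrd hdc F2)
      · rw [minorOrZero_eq_zero _ _ F2, mul_zero, sub_zero]
        exact Ideal.zero_mem _
  · -- bigI not full
    rw [minorOrZero_eq_zero _ _ F1, zero_mul, zero_sub]
    by_cases F3 : ∀ p q, ((Fin.snoc (α := fun _ => ℕ) kr (D.d i0) p, Fin.cons (α := fun _ => ℕ) (D.c i0) ls q) : ℕ × ℕ) ∈ D.L
    · by_cases F4 : ∀ p q, ((ri p, js q) : ℕ × ℕ) ∈ D.L
      · -- F3 and F4 would imply F1
        exfalso
        have hdc : ((D.d i0, D.c i0) : ℕ × ℕ) ∈ D.L := by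
          have := F3 (Fin.last s) 0
          rwa [Fin.snoc_last, Fin.cons_zero] at this
        exact F1 (hderive ri js hjsc hrid hdc F4)
      · rw [minorOrZero_eq_zero _ _ F4, mul_zero, neg_zero]
        exact Ideal.zero_mem _
    · rw [minorOrZero_eq_zero _ _ F3, zero_mul, neg_zero]
      exact Ideal.zero_mem _
end

section
/- Fix i ∈ {1,…,k} with t_i ≥ 2, d_{i−1} < d_i and c_i < c_{i+1} (with d_0 = 0, c_{k+1} = n+1), and write t = t_i, d = d_i, c = c_i. Let N = L ∖ {x_{d,c}}, a ladder with the same upper outside corners as L and lower outside corners (d_1,c_1),…,(d_{i−1},c_{i−1}),(d−1,c),(d,c+1),(d_{i+1},c_{i+1}),…,(d_k,c_k), and let τ = (t_1,…,t_{i−1},t_i,t_i,t_{i+1},…,t_k). Then I_t(L) = I_τ(N) + Q, where Q is the ideal of K[L] generated by the t×t minors of X with all entries in L_i that involve the entry x_{d,c}, i.e. minors with rows i_1 < … < i_{t−1} < d together with row d and columns c together with c < j_1 < … < j_{t−1} ≤ n, all of whose entries lie in L. -/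
open MvPolynomial

/-- The row indices `i_1 < … < i_s, d` (appending `d` at the end). -/
def snocRow {s : ℕ} (ri : Fin s → ℕ) (dv : ℕ) : Fin (s + 1) → ℕ := Fin.snoc ri dv

/-- The column indices `c, j_1 < … < j_s` (prepending `c` at the front). -/
def consCol {s : ℕ} (cv : ℕ) (js : Fin s → ℕ) : Fin (s + 1) → ℕ := Fin.cons cv js

/-- The ideal `Q ⊆ K[L]` generated by the `t × t` minors of `X` with all entries in `L_i`
that involve the corner entry `x_{d,c}`: rows `i_1 < … < i_{t−1} < d` together with `d`,
columns `c` together with `c < j_1 < … < j_{t−1}`. -/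
noncomputable def cornerMinorsIdeal (D : LadderData) (i0 : Fin D.k) (s : ℕ)
    (K : Type*) [Field K] : Ideal (MvPolynomial ↥D.L K) :=
  Ideal.span {f | ∃ ri js : Fin s → ℕ, StrictMono ri ∧ StrictMono js ∧
    (∀ p, ri p < D.d i0) ∧ (∀ q, D.c i0 < js q) ∧
    (∀ p q : Fin (s + 1),
      (snocRow ri (D.d i0) p, consCol (D.c i0) js q) ∈ D.Lj i0) ∧
    ∃ hmem : ∀ p q : Fin (s + 1),
      ((snocRow ri (D.d i0) p, consCol (D.c i0) js q) : ℕ × ℕ) ∈ D.L,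
    f = (Matrix.of fun p q : Fin (s + 1) =>
      (MvPolynomial.X (⟨(snocRow ri (D.d i0) p, consCol (D.c i0) js q),
        hmem p q⟩ : D.L) : MvPolynomial ↥D.L K)).det}

/-!
For `j ≠ i` the corner `x_{d,c}` lies outside `L_j` (this is where `d_{i-1} < d` and
`c < c_{i+1}` enter), so `L_j` is itself a subladder of `N`. A `t × t` minor of `L_i` either
avoids row `d`, and then lies in the subladder of `N` with corner `(d-1,c)`, or avoids column
`c`, and then lies in the one with corner `(d,c+1)`, or contains `x_{d,c}` and generates `Q`.
Conversely each subladder of `N` sits inside an `L_j` with the same minor size.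
-/

lemma Fin.strictMono_snoc {α : Type*} [Preorder α] {n : ℕ} {f : Fin n → α} {a : α} :
    StrictMono (Fin.snoc f a : Fin (n + 1) → α) ↔ StrictMono f ∧ ∀ i, f i < a := by
  rw [← Fin.insertNth_last', Fin.strictMono_insertNth_iff]
  simp [Fin.castSucc_lt_last, Fin.le_def]

namespace LadderData

variable (D : LadderData) (i0 : Fin D.k)

def Nj (l : Fin (D.k + 1)) : Set (ℕ × ℕ) :=
  {p ∈ D.Nset i0 | p.1 ≤ D.dN i0 l ∧ D.cN i0 l ≤ p.2}

variable {D i0} {j : Fin D.k}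

lemma tN_castSucc (h : j ≤ i0) : D.tN i0 j.castSucc = D.t j := by
  simp [tN, Fin.le_def.mp h]

lemma tN_succ (h : i0 ≤ j) : D.tN i0 j.succ = D.t j := by
  have := Fin.le_def.mp h
  simp [tN, show ¬ (j : ℕ) + 1 ≤ i0 by omega]

lemma dN_castSucc_of_lt (h : j < i0) : D.dN i0 j.castSucc = D.d j := by
  simp [dN, Fin.lt_def.mp h]

lemma dN_castSucc_self : D.dN i0 i0.castSucc = D.d i0 - 1 := by
  simp [dN]

lemma cN_castSucc (h : j ≤ i0) : D.cN i0 j.castSucc = D.c j := by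
  rcases h.lt_or_eq with h | rfl
  · simp [cN, Fin.lt_def.mp h]
  · simp [cN]

lemma dN_succ (h : i0 ≤ j) : D.dN i0 j.succ = D.d j := by
  rcases h.lt_or_eq with h | rfl
  · have := Fin.lt_def.mp h
    simp [dN, show ¬ (j : ℕ) + 1 < i0 by omega, show (j : ℕ) + 1 ≠ i0 by omega,
      show (j : ℕ) ≠ i0 by omega]
  · simp [dN]

lemma cN_succ_self : D.cN i0 i0.succ = D.c i0 + 1 := by
  simp [cN]

lemma cN_succ_of_lt (h : i0 < j) : D.cN i0 j.succ = D.c j := by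
  have := Fin.lt_def.mp h
  simp [cN, show ¬ (j : ℕ) + 1 < i0 by omega, show (j : ℕ) + 1 ≠ i0 by omega,
    show (j : ℕ) ≠ i0 by omega]

lemma d_lt_of_lt (hd : D.dPrev i0 < D.d i0) (h : j < i0) : D.d j < D.d i0 := by
  have := Fin.lt_def.mp h
  have hprev : D.d j ≤ D.dPrev i0 := by
    rw [dPrev, dif_pos (by omega)]
    exact D.d_mono (Fin.le_def.mpr (by simp; omega))
  omega

lemma c_lt_of_lt (hc : D.c i0 < D.cNext i0) (h : i0 < j) : D.c i0 < D.c j := by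
  have := Fin.lt_def.mp h
  have hnext : D.cNext i0 ≤ D.c j := by
    rw [cNext, dif_pos (by omega)]
    exact D.c_mono (Fin.le_def.mpr (by simp; omega))
  omega

lemma Nj_castSucc_subset_Lj (h : j ≤ i0) : D.Nj i0 j.castSucc ⊆ D.Lj j := by
  rintro p ⟨⟨hpL, -⟩, hp1, hp2⟩
  refine ⟨hpL, ?_, cN_castSucc h ▸ hp2⟩
  rcases h.lt_or_eq with h | rfl
  · exact dN_castSucc_of_lt h ▸ hp1
  · rw [dN_castSucc_self] at hp1
    omega

lemma Nj_succ_subset_Lj (h : i0 ≤ j) : D.Nj i0 j.succ ⊆ D.Lj j := by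
  rintro p ⟨⟨hpL, -⟩, hp1, hp2⟩
  refine ⟨hpL, dN_succ h ▸ hp1, ?_⟩
  rcases h.lt_or_eq with h | rfl
  · exact cN_succ_of_lt h ▸ hp2
  · rw [cN_succ_self] at hp2
    omega

lemma Lj_subset_Nj_castSucc (hd : D.dPrev i0 < D.d i0) (h : j < i0) :
    D.Lj j ⊆ D.Nj i0 j.castSucc := by
  rintro p ⟨hpL, hp1, hp2⟩
  have := d_lt_of_lt hd h
  refine ⟨⟨hpL, fun hp => ?_⟩, dN_castSucc_of_lt h ▸ hp1, cN_castSucc h.le ▸ hp2⟩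
  rw [Set.mem_singleton_iff.mp hp] at hp1
  omega

lemma Lj_subset_Nj_succ (hc : D.c i0 < D.cNext i0) (h : i0 < j) :
    D.Lj j ⊆ D.Nj i0 j.succ := by
  rintro p ⟨hpL, hp1, hp2⟩
  have := c_lt_of_lt hc h
  refine ⟨⟨hpL, fun hp => ?_⟩, dN_succ h.le ▸ hp1, cN_succ_of_lt h ▸ hp2⟩
  rw [Set.mem_singleton_iff.mp hp] at hp2
  omega

lemma mem_Nj_castSucc_self {p : ℕ × ℕ} (hp : p ∈ D.Lj i0) (h : p.1 < D.d i0) :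
    p ∈ D.Nj i0 i0.castSucc := by
  refine ⟨⟨hp.1, fun hp' => ?_⟩, ?_, cN_castSucc le_rfl ▸ hp.2.2⟩
  · rw [Set.mem_singleton_iff.mp hp'] at h
    exact lt_irrefl _ h
  · rw [dN_castSucc_self]
    omega

lemma mem_Nj_succ_self {p : ℕ × ℕ} (hp : p ∈ D.Lj i0) (h : D.c i0 < p.2) :
    p ∈ D.Nj i0 i0.succ := by
  refine ⟨⟨hp.1, fun hp' => ?_⟩, dN_succ le_rfl ▸ hp.2.1, cN_succ_self ▸ h⟩
  rw [Set.mem_singleton_iff.mp hp'] at h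
  exact lt_irrefl _ h

end LadderData

open LadderData

section Ideals

variable {K : Type*} [Field K]

lemma minor_mem_minorsIdeal {V S : Set (ℕ × ℕ)} {s : ℕ} {r cc : Fin s → ℕ}
    (hr : StrictMono r) (hcc : StrictMono cc) (hS : ∀ p q, (r p, cc q) ∈ S)
    (hmem : ∀ p q, ((r p, cc q) : ℕ × ℕ) ∈ V) :
    (Matrix.of fun p q =>
      (MvPolynomial.X (⟨(r p, cc q), hmem p q⟩ : V) : MvPolynomial ↥V K)).det ∈
      minorsIdeal K V S s :=
  Ideal.subset_span ⟨r, cc, hr, hcc, hS, hmem, rfl⟩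

lemma minorsIdeal_mono (V : Set (ℕ × ℕ)) {S S' : Set (ℕ × ℕ)} (h : S ⊆ S') (s : ℕ) :
    minorsIdeal K V S s ≤ minorsIdeal K V S' s := by
  refine Ideal.span_le.mpr ?_
  rintro f ⟨r, cc, hr, hcc, hS, hmem, rfl⟩
  exact minor_mem_minorsIdeal hr hcc (fun p q => h (hS p q)) hmem

variable {D : LadderData} {i0 : Fin D.k} {S : Set (ℕ × ℕ)} {u : ℕ}

lemma minorsIdeal_le_It {j : Fin D.k} (hu : D.t j = u) (h : S ⊆ D.Lj j) :
    minorsIdeal K D.L S u ≤ D.It K :=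
  hu ▸ (minorsIdeal_mono D.L h _).trans
    (le_iSup (fun j => minorsIdeal K D.L (D.Lj j) (D.t j)) j)

lemma minorsIdeal_le_IτN {l : Fin (D.k + 1)} (hu : D.tN i0 l = u) (h : S ⊆ D.Nj i0 l) :
    minorsIdeal K D.L S u ≤ D.IτN i0 K :=
  hu ▸ (minorsIdeal_mono D.L h _).trans
    (le_iSup (fun l => minorsIdeal K D.L (D.Nj i0 l) (D.tN i0 l)) l)

variable (D i0 K) in
lemma IτN_le_It : D.IτN i0 K ≤ D.It K := by
  refine iSup_le fun l => ?_
  by_cases hl : (l : ℕ) ≤ i0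
  · obtain ⟨j, rfl⟩ : ∃ j : Fin D.k, j.castSucc = l := ⟨⟨l, by omega⟩, rfl⟩
    exact minorsIdeal_le_It (tN_castSucc hl).symm (Nj_castSucc_subset_Lj hl)
  · obtain ⟨j, rfl⟩ : ∃ j : Fin D.k, j.succ = l :=
      ⟨⟨l - 1, by omega⟩, Fin.ext (by simp; omega)⟩
    have hj : i0 ≤ j := Fin.le_def.mpr (by simp at hl; omega)
    exact minorsIdeal_le_It (tN_succ hj).symm (Nj_succ_subset_Lj hj)

lemma cornerMinorsIdeal_le_It {s : ℕ} (hs : s + 1 = D.t i0) :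
    cornerMinorsIdeal D i0 s K ≤ D.It K := by
  refine Ideal.span_le.mpr ?_
  rintro f ⟨ri, js, hri, hjs, hrd, hcjs, hLj, hmem, rfl⟩
  refine minorsIdeal_le_It hs.symm subset_rfl (minor_mem_minorsIdeal ?_ ?_ hLj hmem)
  · exact Fin.strictMono_snoc.mpr ⟨hri, hrd⟩
  · exact Fin.strictMono_cons.mpr ⟨hcjs, hjs⟩

lemma minorsIdeal_Lj_self_le {s : ℕ} (hs : s + 1 = D.t i0) :
    minorsIdeal K D.L (D.Lj i0) (D.t i0) ≤ D.IτN i0 K ⊔ cornerMinorsIdeal D i0 s K := by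
  rw [← hs]
  refine Ideal.span_le.mpr ?_
  rintro f ⟨r, cc, hr, hcc, hS, hmem, rfl⟩
  rcases (show r (Fin.last s) ≤ D.d i0 from (hS _ 0).2.1).lt_or_eq with hlast | hlast
  · have hrow p : r p < D.d i0 := (hr.monotone (Fin.le_last p)).trans_lt hlast
    exact Ideal.mem_sup_left (minorsIdeal_le_IτN ((tN_castSucc le_rfl).trans hs.symm) subset_rfl
      (minor_mem_minorsIdeal hr hcc (fun p q => mem_Nj_castSucc_self (hS p q) (hrow p)) hmem))
  rcases (show D.c i0 ≤ cc 0 from (hS 0 _).2.2).lt_or_eq with hfirst | hfirst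
  · have hcol q : D.c i0 < cc q := hfirst.trans_le (hcc.monotone (Fin.zero_le q))
    exact Ideal.mem_sup_left (minorsIdeal_le_IτN ((tN_succ le_rfl).trans hs.symm) subset_rfl
      (minor_mem_minorsIdeal hr hcc (fun p q => mem_Nj_succ_self (hS p q) (hcol q)) hmem))
  have hr' : snocRow (Fin.init r) (D.d i0) = r := by
    rw [snocRow, ← hlast, Fin.snoc_init_self]
  have hcc' : consCol (D.c i0) (Fin.tail cc) = cc := by
    rw [consCol, hfirst, Fin.cons_self_tail]
  obtain ⟨hri, hrd⟩ := Fin.strictMono_snoc.mp (hr' ▸ hr)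
  obtain ⟨hcjs, hjs⟩ := Fin.strictMono_cons.mp (hcc' ▸ hcc)
  refine Ideal.mem_sup_right (Ideal.subset_span ⟨_, _, hri, hjs, hrd, hcjs, ?_⟩)
  rw [hr', hcc']
  exact ⟨hS, hmem, rfl⟩

end Ideals

theorem It_eq_IτN_add_cornerMinors_general (K : Type*) [Field K]
    (D : LadderData) (i0 : Fin D.k)
    (hd : D.dPrev i0 < D.d i0) (hc : D.c i0 < D.cNext i0)
    (s : ℕ) (hs : s + 1 = D.t i0) :
    D.It K = D.IτN i0 K + cornerMinorsIdeal D i0 s K := by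
  rw [Submodule.add_eq_sup]
  refine le_antisymm (iSup_le fun j => ?_) (sup_le (IτN_le_It K D i0) (cornerMinorsIdeal_le_It hs))
  rcases lt_trichotomy j i0 with hj | rfl | hj
  · exact (minorsIdeal_le_IτN (tN_castSucc hj.le) (Lj_subset_Nj_castSucc hd hj)).trans le_sup_left
  · exact minorsIdeal_Lj_self_le hs
  · exact (minorsIdeal_le_IτN (tN_succ hj.le) (Lj_subset_Nj_succ hc hj)).trans le_sup_left

/-- **Lemma.** Fix `i` with `t_i ≥ 2`, `d_{i−1} < d_i`, `c_i < c_{i+1}` and write `t = t_i`,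
`d = d_i`, `c = c_i`.  Then `I_t(L) = I_τ(N) + Q`, where `Q` is the ideal generated by the
`t × t` minors of `X` with all entries in `L_i` that involve the entry `x_{d,c}`. -/
theorem It_eq_IτN_add_cornerMinors (K : Type*) [Field K]
    (D : LadderData) (hnd : D.Nondeg) (i0 : Fin D.k)
    (hd : D.dPrev i0 < D.d i0) (hc : D.c i0 < D.cNext i0)
    (s : ℕ) (hs1 : 1 ≤ s) (hs : s + 1 = D.t i0) :
    D.It K = D.IτN i0 K + cornerMinorsIdeal D i0 s K :=
  It_eq_IτN_add_cornerMinors_general K D i0 hd hc s hs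
end
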